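/- arXiv:2205.11466 — 9 statements merged into one kernel-verified Lean document; each statement's English description precedes it below -/
import Mathlib

section
/- Let d ≥ 1 and r ≥ 2 be integers, and let ⟪·,·⟫ be any symmetric bilinear form on ℝ[x] that is positive definite on the subspace of polynomials of degree at most 2d (i.e. ⟪q,q⟫ > 0 for every nonzero q with deg q ≤ 2d); write ‖q‖² = ⟪q,q⟫. Let p ∈ ℝ[x] with deg p ≤ 2d satisfy p(x) ≥ 0 for all x ∈ ℝ. Suppose u₁,…,u_r ∈ ℝ[x] with deg uᵢ ≤ d satisfy the gradient condition: ⟪∑ᵢ uᵢvᵢ, ∑ᵢ uᵢ² − p⟫ = 0 for all v₁,…,v_r ∈ ℝ[x] with deg vᵢ ≤ d, and the Hessian condition: ⟪∑ᵢ vᵢ², ∑ᵢ uᵢ² − p⟫ + 2‖∑ᵢ uᵢvᵢ‖² ≥ 0 for all v₁,…,v_r ∈ ℝ[x] with deg vᵢ ≤ d. Then ∑ᵢ uᵢ² = p. -/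
/-!
Put `q = σ(u) - p` and `L = ⟪·, q⟫`. The gradient condition at `v = u` gives `⟪σ(u), q⟫ = 0`,
so `‖q‖² = -L p`, and since `p = a² + b²` with `deg a, deg b ≤ d` it suffices to show
`L a² ≥ 0` whenever `deg a ≤ d`. For this two coordinates suffice: write them as `g h₁, g h₂`
with `h₁, h₂` coprime, and put `D = max (deg h₁) (deg h₂)`, `s = h₁² + h₂²`.

* Coprime `h₁, h₂` generate `P_{d+D}` from `P_d` (`P_n` the polynomials of degree `≤ n`), so
  the gradient condition makes `L` vanish on `g · P_{d+D}`.
* Along `(h₂ t, -h₁ t)`, where `g h₁ x + g h₂ y = 0`, the Hessian condition gives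
  `L (s t²) ≥ 0`; perturbing shows that `L (s t²) = 0` forces `L` to vanish on `t · P_{d+D}`.
* Dividing out common factors with `s`, and then enlarging the degree window, produces `G` with
  `deg G ≤ deg g`, `G` coprime to `s`, and `L` vanishing on `G · P_{2d - deg G - 1}`.
* If `v s ≡ 1 (mod G)` then `a² ≡ s ((a h₁ v)² + (a h₂ v)²) (mod G)`; matching the coefficient of
  `X^{2d}` turns this into `a² = s (t₁² + t₂²) + G Q` with `deg Q ≤ 2d - deg G - 1`, whence
  `L a² = L (s t₁²) + L (s t₂²) ≥ 0`.
-/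

open Polynomial

namespace Polynomial

section OrderedRing

variable {R : Type*} [CommRing R] [LinearOrder R] [IsStrictOrderedRing R]

theorem coeff_sq_add_sq_pos {a b : R[X]} (hab : a ≠ 0 ∨ b ≠ 0) :
    0 < (a ^ 2 + b ^ 2).coeff (2 * max a.natDegree b.natDegree) := by
  rw [coeff_add, coeff_pow_of_natDegree_le (le_max_left _ _),
    coeff_pow_of_natDegree_le (le_max_right _ _)]
  have : (a ≠ 0 ∧ max a.natDegree b.natDegree = a.natDegree) ∨
      (b ≠ 0 ∧ max a.natDegree b.natDegree = b.natDegree) := by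
    by_cases ha : a = 0
    · simp_all
    by_cases hb : b = 0
    · simp_all
    rcases max_choice a.natDegree b.natDegree with h | h <;> simp_all
  rcases this with ⟨h, hM⟩ | ⟨h, hM⟩ <;> rw [hM]
  · have := leadingCoeff_ne_zero.mpr h
    exact add_pos_of_pos_of_nonneg (by positivity) (sq_nonneg _)
  · have := leadingCoeff_ne_zero.mpr h
    exact add_pos_of_nonneg_of_pos (sq_nonneg _) (by positivity)

theorem natDegree_sq_add_sq (a b : R[X]) :
    (a ^ 2 + b ^ 2).natDegree = 2 * max a.natDegree b.natDegree := by
  by_cases hab : a = 0 ∧ b = 0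
  · simp [hab.1, hab.2]
  refine le_antisymm ?_ (le_natDegree_of_ne_zero (coeff_sq_add_sq_pos (not_and_or.mp hab)).ne')
  refine natDegree_add_le_of_degree_le ?_ ?_ <;> refine natDegree_pow_le_of_le 2 ?_
  exacts [le_max_left _ _, le_max_right _ _]

end OrderedRing

theorem exists_sq_add_sq_dvd_of_nonneg {p : ℝ[X]} (hp : 0 < p.natDegree)
    (hnn : ∀ x, 0 ≤ p.eval x) : ∃ α γ : ℝ, (X - C α) ^ 2 + C γ ^ 2 ∣ p := by
  have hp0 : p ≠ 0 := ne_zero_of_natDegree_gt hp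
  obtain ⟨z, hz⟩ := IsAlgClosed.exists_aeval_eq_zero ℂ p (natDegree_pos_iff_degree_pos.mp hp).ne'
  refine ⟨z.re, z.im, ?_⟩
  by_cases him : z.im = 0
  · have hroot : p.IsRoot z.re := by
      have : (z.re : ℂ) = z := Complex.ext rfl (by simp [him])
      rw [← this] at hz
      exact Complex.ofReal_eq_zero.mp ((ofReal_eval (K := ℂ) p z.re).trans hz)
    -- a real root of a nonnegative polynomial is a local minimum, hence a double root
    have hmin : IsLocalMin (fun x => p.eval x) z.re :=
      Filter.Eventually.of_forall fun x => by simpa [hroot.eq_zero] using hnn x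
    have hderiv : p.derivative.IsRoot z.re := by
      simpa [Polynomial.deriv] using hmin.deriv_eq_zero
    rw [him, C_0, zero_pow two_ne_zero, add_zero, ← le_rootMultiplicity_iff hp0]
    exact (one_lt_rootMultiplicity_iff_isRoot hp0).mpr ⟨hroot, hderiv⟩
  · convert quadratic_dvd_of_aeval_eq_zero_im_ne_zero p hz him using 1
    rw [← Complex.normSq_eq_norm_sq, Complex.normSq_apply]
    simp only [C_mul, C_add, C_ofNat]
    ring

theorem exists_eq_sq_add_sq_of_nonneg {p : ℝ[X]} (hnn : ∀ x, 0 ≤ p.eval x) :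
    ∃ a b : ℝ[X], p = a ^ 2 + b ^ 2 := by
  induction hn : p.natDegree using Nat.strong_induction_on generalizing p with
  | _ n ih =>
  rcases Nat.eq_zero_or_pos n with rfl | hpos
  · obtain ⟨c, rfl⟩ := natDegree_eq_zero.mp hn
    have hc : 0 ≤ c := by simpa using hnn 0
    exact ⟨C √c, 0, by rw [← C_pow, Real.sq_sqrt hc]; simp⟩
  subst hn
  obtain ⟨α, γ, q, rfl⟩ := exists_sq_add_sq_dvd_of_nonneg hpos hnn
  have hq0 : q ≠ 0 := by rintro rfl; simp at hpos
  have hπ : ((X - C α) ^ 2 + C γ ^ 2).natDegree = 2 := by compute_degree!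
  have hπpos : ∀ x ≠ α, 0 < ((X - C α) ^ 2 + C γ ^ 2).eval x := fun x hx => by
    have : x - α ≠ 0 := sub_ne_zero.mpr hx
    simp only [eval_add, eval_pow, eval_sub, eval_X, eval_C]
    positivity
  have hq : ∀ x, 0 ≤ q.eval x := by
    refine (dense_compl_singleton α).induction (fun x hx => ?_)
      (isClosed_le continuous_const q.continuous)
    exact nonneg_of_mul_nonneg_right (by simpa using hnn x) (hπpos x hx)
  have hπ0 : (X - C α) ^ 2 + C γ ^ 2 ≠ 0 := by rintro h; simp [h] at hπ
  obtain ⟨a, b, rfl⟩ := ih q.natDegree (by rw [natDegree_mul hπ0 hq0]; omega) hq rfl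
  exact ⟨(X - C α) * a - C γ * b, (X - C α) * b + C γ * a, by ring⟩

section Field

variable {K : Type*} [Field K]

theorem exists_eq_mul_add_mul_of_isCoprime {h₁ h₂ f : K[X]} (hcop : IsCoprime h₁ h₂) {m : ℕ}
    (hm : max h₁.natDegree h₂.natDegree ≤ m)
    (hf : f.natDegree ≤ m + max h₁.natDegree h₂.natDegree) :
    ∃ w₁ w₂ : K[X], w₁.natDegree ≤ m ∧ w₂.natDegree ≤ m ∧ f = h₁ * w₁ + h₂ * w₂ := by
  wlog h : h₂.natDegree ≤ h₁.natDegree ∧ h₁ ≠ 0 generalizing h₁ h₂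
  · have h' : h₁.natDegree ≤ h₂.natDegree ∧ h₂ ≠ 0 := by
      by_cases h₁0 : h₁ = 0
      · subst h₁0
        exact ⟨by simp, (isCoprime_zero_left.mp hcop).ne_zero⟩
      have h₁₂ : h₁.natDegree < h₂.natDegree := not_le.mp fun h₂₁ => h ⟨h₂₁, h₁0⟩
      exact ⟨h₁₂.le, ne_zero_of_natDegree_gt h₁₂⟩
    obtain ⟨w₂, w₁, hw₂, hw₁, hf'⟩ :=
      this hcop.symm (by rwa [max_comm]) (by rwa [max_comm]) h'
    exact ⟨w₁, w₂, hw₁, hw₂, by rw [hf', add_comm]⟩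
  obtain ⟨h₂₁, h₁0⟩ := h
  rw [max_eq_left h₂₁] at hm hf
  obtain ⟨a, b, hab⟩ := hcop
  -- reduce the Bézout solution `b * f` of `h₂ * w₂ ≡ f` modulo `h₁`
  set w₂ := b * f % h₁ with hw₂_def
  have hw₂ : w₂.natDegree ≤ m :=
    (natDegree_le_natDegree (degree_mod_lt _ h₁0).le).trans hm
  obtain ⟨w₁, hw₁⟩ : h₁ ∣ f - h₂ * w₂ := ⟨a * f + h₂ * (b * f / h₁), by
    rw [hw₂_def, EuclideanDomain.mod_eq_sub_mul_div]
    linear_combination (-f) * hab⟩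
  refine ⟨w₁, w₂, ?_, hw₂, by linear_combination hw₁⟩
  rcases eq_or_ne w₁ 0 with rfl | hw₁0
  · simp
  have : h₁.natDegree + w₁.natDegree ≤ m + h₁.natDegree := by
    rw [← natDegree_mul h₁0 hw₁0, ← hw₁]
    refine (natDegree_sub_le _ _).trans (max_le hf ?_)
    exact natDegree_mul_le.trans (by omega)
  omega

theorem exists_dvd_sq_sub_mul_sq_add_sq {G h₁ h₂ : K[X]} (hG : G ≠ 0)
    (hcop : IsCoprime G (h₁ ^ 2 + h₂ ^ 2)) (a : K[X]) :
    ∃ t₁ t₂ : K[X], t₁.degree < G.degree ∧ t₂.degree < G.degree ∧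
      G ∣ a ^ 2 - (h₁ ^ 2 + h₂ ^ 2) * (t₁ ^ 2 + t₂ ^ 2) := by
  obtain ⟨u, v, huv⟩ := hcop
  -- `v` inverts `h₁² + h₂²` modulo `G`, so `(h₁² + h₂²) * ((a h₁ v)² + (a h₂ v)²) ≡ a²`
  refine ⟨a * h₁ * v % G, a * h₂ * v % G, degree_mod_lt _ hG, degree_mod_lt _ hG, ?_⟩
  rw [← Ideal.Quotient.eq_zero_iff_dvd]
  set π := Ideal.Quotient.mk (Ideal.span {G})
  have hG0 : π G = 0 := Ideal.Quotient.mk_singleton_self G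
  have hmod (x : K[X]) : π (x % G) = π x := by
    rw [EuclideanDomain.mod_eq_sub_mul_div, map_sub, map_mul, hG0, zero_mul, sub_zero]
  have hinv := congrArg π huv
  simp only [map_add, map_mul, map_pow, map_one, hG0, mul_zero, zero_add] at hinv
  simp only [map_sub, map_mul, map_pow, map_add, hmod]
  linear_combination (-(π a) ^ 2 * (1 + π v * (π h₁ ^ 2 + π h₂ ^ 2))) * hinv

theorem exists_dvd_sub_coeff_eq {G t : K[X]} (ht : t.degree < G.degree) {n : ℕ}
    (hn : G.natDegree ≤ n) (c : K) :
    ∃ t' : K[X], t'.natDegree ≤ n ∧ t'.coeff n = c ∧ G ∣ t' - t := by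
  obtain ⟨e, rfl⟩ : ∃ e, n = G.natDegree + e := ⟨n - G.natDegree, by omega⟩
  have hG : G ≠ 0 := by rintro rfl; simp at ht
  have htn : t.degree < ↑(G.natDegree + e) :=
    ht.trans_le ((degree_le_natDegree).trans (by exact_mod_cast le_self_add))
  refine ⟨t + C (c / G.leadingCoeff) * (G * X ^ e), ?_, ?_, ?_⟩
  · refine natDegree_add_le_of_degree_le (natDegree_le_of_degree_le htn.le) ?_
    exact natDegree_C_mul_le _ _ |>.trans (natDegree_mul_le.trans (by simp))
  · rw [coeff_add, coeff_C_mul, coeff_mul_X_pow, coeff_eq_zero_of_degree_lt htn, coeff_natDegree,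
      zero_add, div_mul_cancel₀ _ (leadingCoeff_ne_zero.mpr hG)]
  · exact ⟨C (c / G.leadingCoeff) * X ^ e, by ring⟩

end Field

theorem exists_eq_mul_sq_add_sq_add_mul {G h₁ h₂ a : ℝ[X]} {d D : ℕ} (hG : G ≠ 0)
    (hGs : IsCoprime G (h₁ ^ 2 + h₂ ^ 2)) (hne : h₁ ≠ 0 ∨ h₂ ≠ 0)
    (hD : max h₁.natDegree h₂.natDegree = D) (hGd : G.natDegree + D ≤ d) (ha : a.natDegree ≤ d) :
    ∃ t₁ t₂ Q : ℝ[X], t₁.natDegree + D ≤ d ∧ t₂.natDegree + D ≤ d ∧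
      Q.natDegree ≤ 2 * d - G.natDegree - 1 ∧
      a ^ 2 = (h₁ ^ 2 + h₂ ^ 2) * (t₁ ^ 2 + t₂ ^ 2) + G * Q := by
  set s := h₁ ^ 2 + h₂ ^ 2
  have hs : s.natDegree ≤ 2 * D := by rw [natDegree_sq_add_sq, hD]
  have hsD : 0 < s.coeff (2 * D) := hD ▸ coeff_sq_add_sq_pos hne
  obtain ⟨t₀, t₂, ht₀, ht₂, hdvd⟩ := exists_dvd_sq_sub_mul_sq_add_sq hG hGs a
  -- shift `t₀` by a multiple of `G` so that the coefficients of `X ^ (2 * d)` cancel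
  obtain ⟨t₁, ht₁, hc, ht₁₀⟩ := exists_dvd_sub_coeff_eq ht₀ (n := d - D) (by omega)
    (a.coeff d / √(s.coeff (2 * D)))
  have ht₂' : t₂.degree < ↑(d - D) :=
    ht₂.trans_le (degree_le_natDegree.trans (by exact_mod_cast (by omega)))
  have ht₂n : t₂.natDegree ≤ d - D := natDegree_le_of_degree_le ht₂'.le
  have hGF : G ∣ a ^ 2 - s * (t₁ ^ 2 + t₂ ^ 2) := by
    rw [show a ^ 2 - s * (t₁ ^ 2 + t₂ ^ 2) =
      a ^ 2 - s * (t₀ ^ 2 + t₂ ^ 2) - s * (t₁ + t₀) * (t₁ - t₀) by ring]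
    exact dvd_sub hdvd (dvd_mul_of_dvd_right ht₁₀ _)
  have hcoeff (t : ℝ[X]) (ht : t.natDegree ≤ d - D) :
      (s * t ^ 2).coeff (2 * d) = s.coeff (2 * D) * t.coeff (d - D) ^ 2 := by
    rw [show 2 * d = 2 * D + 2 * (d - D) by omega,
      coeff_mul_add_eq_of_natDegree_le hs (natDegree_pow_le_of_le 2 ht),
      coeff_pow_of_natDegree_le ht]
  have htop : (a ^ 2 - s * (t₁ ^ 2 + t₂ ^ 2)).coeff (2 * d) = 0 := by
    rw [coeff_sub, mul_add, coeff_add, hcoeff t₁ ht₁, hcoeff t₂ ht₂n, hc,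
      coeff_eq_zero_of_degree_lt ht₂', coeff_pow_of_natDegree_le ha, div_pow,
      Real.sq_sqrt hsD.le]
    field_simp
    ring
  have hdeg : (a ^ 2 - s * (t₁ ^ 2 + t₂ ^ 2)).natDegree ≤ 2 * d := by
    refine (natDegree_sub_le _ _).trans (max_le ?_ (natDegree_mul_le.trans ?_))
    · exact natDegree_pow_le_of_le 2 ha
    grw [hs, natDegree_add_le, natDegree_pow_le_of_le 2 ht₁, natDegree_pow_le_of_le 2 ht₂n]
    omega
  obtain ⟨Q, hQ⟩ := hGF
  refine ⟨t₁, t₂, Q, by omega, by omega, ?_, by linear_combination hQ⟩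
  rcases eq_or_ne Q 0 with rfl | hQ0
  · simp
  have hlt : (a ^ 2 - s * (t₁ ^ 2 + t₂ ^ 2)).natDegree < 2 * d := by
    refine hdeg.lt_of_ne fun h2d => ?_
    rw [← h2d, coeff_natDegree, leadingCoeff_eq_zero, hQ] at htop
    exact mul_ne_zero hG hQ0 htop
  rw [hQ, natDegree_mul hG hQ0] at hlt
  omega

end Polynomial

section Functional

variable {R M : Type*} [CommSemiring R] [AddCommMonoid M] [Module R M]

def VanishesOnMultiples (L : R[X] →ₗ[R] M) (G : R[X]) (n : ℕ) : Prop :=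
  ∀ f : R[X], f.natDegree ≤ n → L (G * f) = 0

theorem vanishesOnMultiples_iff_X_pow {L : R[X] →ₗ[R] M} {G : R[X]} {n : ℕ} :
    VanishesOnMultiples L G n ↔ ∀ i ≤ n, L (G * X ^ i) = 0 := by
  refine ⟨fun h i hi => h _ ((natDegree_X_pow_le i).trans hi), fun h f hf => ?_⟩
  rw [as_sum_range' f (n + 1) (by omega), Finset.mul_sum, map_sum]
  refine Finset.sum_eq_zero fun i hi => ?_
  rw [← C_mul_X_pow_eq_monomial, mul_left_comm, ← smul_eq_C_mul, map_smul,
    h i (Nat.lt_succ_iff.mp (Finset.mem_range.mp hi)), smul_zero]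

theorem vanishesOnMultiples_of_isCoprime {K : Type*} [Field K] [Module K M] {L : K[X] →ₗ[K] M}
    {G h₁ h₂ : K[X]} {d D : ℕ} (hcop : IsCoprime h₁ h₂) (hD : max h₁.natDegree h₂.natDegree = D)
    (hDd : D ≤ d) (h₁G : ∀ w : K[X], w.natDegree ≤ d → L (G * (h₁ * w)) = 0)
    (h₂G : ∀ w : K[X], w.natDegree ≤ d → L (G * (h₂ * w)) = 0) :
    VanishesOnMultiples L G (d + D) := by
  intro f hf
  obtain ⟨w₁, w₂, hw₁, hw₂, rfl⟩ :=
    exists_eq_mul_add_mul_of_isCoprime hcop (hD ▸ hDd) (hD ▸ hf)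
  rw [mul_add, map_add, h₁G w₁ hw₁, h₂G w₂ hw₂, add_zero]

end Functional

/-- The gradient and Hessian conditions of `f_p` at `u`, for directions `v` supported on two
coordinates `i, j`, with `U₁ = uᵢ`, `U₂ = uⱼ` and `L = ⟪·, σ(u) - p⟫`. -/
structure IsCriticalPair (L : ℝ[X] →ₗ[ℝ] ℝ) (B : ℝ[X] →ₗ[ℝ] ℝ[X] →ₗ[ℝ] ℝ) (d : ℕ)
    (U₁ U₂ : ℝ[X]) : Prop where
  left : ∀ w : ℝ[X], w.natDegree ≤ d → L (U₁ * w) = 0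
  right : ∀ w : ℝ[X], w.natDegree ≤ d → L (U₂ * w) = 0
  hess : ∀ x y : ℝ[X], x.natDegree ≤ d → y.natDegree ≤ d →
    0 ≤ L (x ^ 2 + y ^ 2) + 2 * B (U₁ * x + U₂ * y) (U₁ * x + U₂ * y)

namespace IsCriticalPair

variable {L : ℝ[X] →ₗ[ℝ] ℝ} {B : ℝ[X] →ₗ[ℝ] ℝ[X] →ₗ[ℝ] ℝ} {d D : ℕ} {g h₁ h₂ t : ℝ[X]}

theorem swap {U₁ U₂ : ℝ[X]} (h : IsCriticalPair L B d U₁ U₂) : IsCriticalPair L B d U₂ U₁ :=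
  ⟨h.right, h.left, fun x y hx hy => by simpa only [add_comm] using h.hess y x hy hx⟩

theorem nonneg_sq_add_sq_mul_sq (h : IsCriticalPair L B d (g * h₁) (g * h₂))
    (h₁t : (h₁ * t).natDegree ≤ d) (h₂t : (h₂ * t).natDegree ≤ d) :
    0 ≤ L ((h₁ ^ 2 + h₂ ^ 2) * t ^ 2) := by
  have := h.hess (h₂ * t) (-(h₁ * t)) h₂t (by rwa [natDegree_neg])
  rwa [show g * h₁ * (h₂ * t) + g * h₂ * -(h₁ * t) = 0 by ring, map_zero,
    mul_zero, add_zero, show (h₂ * t) ^ 2 + (-(h₁ * t)) ^ 2 = (h₁ ^ 2 + h₂ ^ 2) * t ^ 2 by ring]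
    at this

theorem map_mul_mul_right_eq_zero (h : IsCriticalPair L B d (g * h₁) (g * h₂))
    (h₁t : (h₁ * t).natDegree ≤ d) (h₂t : (h₂ * t).natDegree ≤ d)
    (h0 : L ((h₁ ^ 2 + h₂ ^ 2) * t ^ 2) = 0) {w : ℝ[X]} (hw : w.natDegree ≤ d) :
    L (t * (h₂ * w)) = 0 := by
  -- perturb the null direction `(h₂ t, -h₁ t)` of the Hessian along `(w, 0)`
  have key (ε : ℝ) : 0 ≤ (L (w ^ 2) + 2 * B (g * h₁ * w) (g * h₁ * w)) * (ε * ε) +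
      2 * L (t * (h₂ * w)) * ε + 0 := by
    have := h.hess (h₂ * t + C ε * w) (-(h₁ * t))
      (natDegree_add_le_of_degree_le h₂t ((natDegree_C_mul_le _ _).trans hw))
      (by rwa [natDegree_neg])
    rw [show (h₂ * t + C ε * w) ^ 2 + (-(h₁ * t)) ^ 2 = (h₁ ^ 2 + h₂ ^ 2) * t ^ 2 +
        C (2 * ε) * (t * (h₂ * w)) + C (ε * ε) * w ^ 2 by simp only [map_mul, C_ofNat]; ring,
      show g * h₁ * (h₂ * t + C ε * w) + g * h₂ * -(h₁ * t) = C ε * (g * h₁ * w) by ring] at this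
    simp only [← smul_eq_C_mul, map_add, map_smul, LinearMap.smul_apply, smul_eq_mul, h0] at this
    linear_combination this
  have hdisc := discrim_le_zero key
  rw [discrim, mul_zero, sub_zero] at hdisc
  have := pow_eq_zero_iff (two_ne_zero) |>.mp (le_antisymm hdisc (sq_nonneg _))
  linarith

theorem map_mul_mul_left_eq_zero (h : IsCriticalPair L B d (g * h₁) (g * h₂))
    (h₁t : (h₁ * t).natDegree ≤ d) (h₂t : (h₂ * t).natDegree ≤ d)
    (h0 : L ((h₁ ^ 2 + h₂ ^ 2) * t ^ 2) = 0) {w : ℝ[X]} (hw : w.natDegree ≤ d) :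
    L (t * (h₁ * w)) = 0 :=
  h.swap.map_mul_mul_right_eq_zero h₂t h₁t (by rwa [add_comm]) hw

theorem vanishesOnMultiples_gcd (h : IsCriticalPair L B d (g * h₁) (g * h₂))
    (hcop : IsCoprime h₁ h₂) (hD : max h₁.natDegree h₂.natDegree = D) (hDd : D ≤ d) :
    VanishesOnMultiples L g (d + D) :=
  vanishesOnMultiples_of_isCoprime hcop hD hDd (fun w hw => by rw [← mul_assoc]; exact h.left w hw)
    (fun w hw => by rw [← mul_assoc]; exact h.right w hw)

theorem vanishesOnMultiples_of_null (h : IsCriticalPair L B d (g * h₁) (g * h₂))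
    (hcop : IsCoprime h₁ h₂) (hD : max h₁.natDegree h₂.natDegree = D)
    (ht : t.natDegree + D ≤ d) (h0 : L ((h₁ ^ 2 + h₂ ^ 2) * t ^ 2) = 0) :
    VanishesOnMultiples L t (d + D) := by
  have hit : ∀ hᵢ : ℝ[X], hᵢ.natDegree ≤ D → (hᵢ * t).natDegree ≤ d :=
    fun hᵢ hi => natDegree_mul_le.trans (by omega)
  have h₁t := hit h₁ (hD ▸ le_max_left _ _)
  have h₂t := hit h₂ (hD ▸ le_max_right _ _)
  exact vanishesOnMultiples_of_isCoprime hcop hD (by omega)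
    (fun _ => h.map_mul_mul_left_eq_zero h₁t h₂t h0)
    (fun _ => h.map_mul_mul_right_eq_zero h₁t h₂t h0)

theorem exists_isCoprime_vanishesOnMultiples (h : IsCriticalPair L B d (g * h₁) (g * h₂))
    (hcop : IsCoprime h₁ h₂) (hD : max h₁.natDegree h₂.natDegree = D) (G : ℝ[X]) (hG : G ≠ 0)
    (hGd : G.natDegree + D ≤ d) (hGv : VanishesOnMultiples L G (d + D)) :
    ∃ G' : ℝ[X], G' ≠ 0 ∧ G'.natDegree ≤ G.natDegree ∧ IsCoprime G' (h₁ ^ 2 + h₂ ^ 2) ∧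
      VanishesOnMultiples L G' (d + D) := by
  induction hk : G.natDegree using Nat.strong_induction_on generalizing G with
  | _ k ih =>
  subst hk
  by_cases hGs : IsCoprime G (h₁ ^ 2 + h₂ ^ 2)
  · exact ⟨G, hG, le_rfl, hGs, hGv⟩
  -- strip from `G` its common factor `E` with `s = h₁² + h₂²`: since `s G'² = G (s' G')`,
  -- the direction `G'` is null, so the remaining factor still annihilates
  obtain ⟨G', s', hG', hs', -⟩ := extract_gcd G (h₁ ^ 2 + h₂ ^ 2)
  set E := gcd G (h₁ ^ 2 + h₂ ^ 2)
  have hE : 0 < E.natDegree := natDegree_pos_iff_degree_pos.mpr <|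
    degree_pos_of_ne_zero_of_nonunit (fun h0 => hG (by simp [hG', h0]))
      (mt (gcd_isUnit_iff _ _).mp hGs)
  have hG'0 : G' ≠ 0 := by rintro rfl; simp [hG'] at hG
  have hE0 : E ≠ 0 := by rintro h0; simp [hG', h0] at hG
  have hGE : G.natDegree = E.natDegree + G'.natDegree := by rw [hG', natDegree_mul hE0 hG'0]
  have hs : (h₁ ^ 2 + h₂ ^ 2).natDegree ≤ 2 * D := by rw [natDegree_sq_add_sq, hD]
  have hs'D : s'.natDegree ≤ 2 * D := by
    rcases eq_or_ne s' 0 with rfl | hs'0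
    · simp
    rw [hs', natDegree_mul hE0 hs'0] at hs
    omega
  have hnull : L ((h₁ ^ 2 + h₂ ^ 2) * G' ^ 2) = 0 := by
    rw [show (h₁ ^ 2 + h₂ ^ 2) * G' ^ 2 = G * (s' * G') by rw [hG', hs']; ring]
    exact hGv _ (natDegree_mul_le.trans (by omega))
  obtain ⟨G'', hG''0, hG''k, hG''s, hG''v⟩ := ih G'.natDegree (by omega) G' hG'0 (by omega)
    (h.vanishesOnMultiples_of_null hcop hD (by omega) hnull) rfl
  exact ⟨G'', hG''0, by omega, hG''s, hG''v⟩

theorem vanishesOnMultiples_extend (h : IsCriticalPair L B d (g * h₁) (g * h₂))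
    (hcop : IsCoprime h₁ h₂) (hD : max h₁.natDegree h₂.natDegree = D) {G : ℝ[X]}
    (hGv : VanishesOnMultiples L G (d + D)) :
    VanishesOnMultiples L G (2 * d - G.natDegree - 1) := by
  have hs : (h₁ ^ 2 + h₂ ^ 2).natDegree ≤ 2 * D := by rw [natDegree_sq_add_sq, hD]
  rw [vanishesOnMultiples_iff_X_pow] at hGv ⊢
  intro i
  induction i using Nat.strong_induction_on with
  | _ i ih =>
  intro hi
  rcases le_or_gt i (d + D) with hi' | hi'
  · exact hGv i hi'
  obtain ⟨m, rfl⟩ : ∃ m, i = d + D + m := ⟨i - (d + D), by omega⟩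
  have hGm : (G * X ^ m).natDegree ≤ G.natDegree + m :=
    natDegree_mul_le.trans (add_le_add le_rfl (natDegree_X_pow_le m))
  -- `s (G Xᵐ)² = G (s G X²ᵐ)` with `s = h₁² + h₂²` lies in the part of the window already covered
  have hnull : L ((h₁ ^ 2 + h₂ ^ 2) * (G * X ^ m) ^ 2) = 0 := by
    rw [show (h₁ ^ 2 + h₂ ^ 2) * (G * X ^ m) ^ 2 = G * ((h₁ ^ 2 + h₂ ^ 2) * G * X ^ (2 * m)) by
      ring]
    refine (vanishesOnMultiples_iff_X_pow (n := d + D + m - 1)).mpr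
      (fun j hj => ih j (by omega) (by omega)) _ (natDegree_mul_le.trans ?_)
    grw [natDegree_mul_le, hs, natDegree_X_pow_le]
    omega
  have := h.vanishesOnMultiples_of_null hcop hD (by omega) hnull (X ^ (d + D))
    (natDegree_X_pow_le _)
  rwa [mul_assoc, ← pow_add, add_comm m] at this

theorem nonneg_sq_of_isCoprime (h : IsCriticalPair L B d (g * h₁) (g * h₂)) (hg : g ≠ 0)
    (hcop : IsCoprime h₁ h₂) (hgd : g.natDegree + max h₁.natDegree h₂.natDegree ≤ d) {a : ℝ[X]}
    (ha : a.natDegree ≤ d) : 0 ≤ L (a ^ 2) := by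
  set D := max h₁.natDegree h₂.natDegree with hD
  have hne : h₁ ≠ 0 ∨ h₂ ≠ 0 := by
    by_contra! h0
    rw [h0.1, h0.2] at hcop
    exact not_isCoprime_zero_zero hcop
  obtain ⟨G, hG0, hGg, hGs, hGv⟩ := h.exists_isCoprime_vanishesOnMultiples hcop hD.symm g hg hgd
    (h.vanishesOnMultiples_gcd hcop hD.symm (by omega))
  obtain ⟨t₁, t₂, Q, ht₁, ht₂, hQ, hrepr⟩ :=
    exists_eq_mul_sq_add_sq_add_mul hG0 hGs hne hD.symm (by omega) ha
  have hcone (t : ℝ[X]) (ht : t.natDegree + D ≤ d) : 0 ≤ L ((h₁ ^ 2 + h₂ ^ 2) * t ^ 2) :=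
    h.nonneg_sq_add_sq_mul_sq (natDegree_mul_le.trans (by omega))
      (natDegree_mul_le.trans (by omega))
  rw [hrepr, mul_add, map_add, map_add, h.vanishesOnMultiples_extend hcop hD.symm hGv Q hQ,
    add_zero]
  exact add_nonneg (hcone t₁ ht₁) (hcone t₂ ht₂)

theorem nonneg_sq {U₁ U₂ : ℝ[X]} (h : IsCriticalPair L B d U₁ U₂) (hU₁ : U₁.natDegree ≤ d)
    (hU₂ : U₂.natDegree ≤ d) {a : ℝ[X]} (ha : a.natDegree ≤ d) : 0 ≤ L (a ^ 2) := by
  by_cases h0 : U₁ = 0 ∧ U₂ = 0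
  · simpa [h0.1, h0.2] using h.hess a 0 ha (by simp)
  obtain ⟨h₁, h₂, hU₁g, hU₂g, hunit⟩ := extract_gcd U₁ U₂
  set g := gcd U₁ U₂
  have hg : g ≠ 0 := fun hg => h0 ((gcd_eq_zero_iff U₁ U₂).mp hg)
  have hgd : g.natDegree ≤ d := by
    rcases not_and_or.mp h0 with hU | hU
    · exact (natDegree_le_of_dvd (gcd_dvd_left _ _) hU).trans hU₁
    · exact (natDegree_le_of_dvd (gcd_dvd_right _ _) hU).trans hU₂
  have hdeg (U hᵢ : ℝ[X]) (hU : U = g * hᵢ) (hUd : U.natDegree ≤ d) :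
      g.natDegree + hᵢ.natDegree ≤ d := by
    rcases eq_or_ne hᵢ 0 with rfl | hi
    · simpa
    · rwa [hU, natDegree_mul hg hi] at hUd
  have := hdeg U₁ h₁ hU₁g hU₁
  have := hdeg U₂ h₂ hU₂g hU₂
  rw [hU₁g, hU₂g] at h
  exact h.nonneg_sq_of_isCoprime hg ((gcd_isUnit_iff _ _).mp hunit) (by omega) ha

theorem of_sum {ι : Type*} [Fintype ι] {u : ι → ℝ[X]} {i j : ι} (hij : i ≠ j)
    (hgrad : ∀ v : ι → ℝ[X], (∀ k, (v k).degree ≤ d) → L (∑ k, u k * v k) = 0)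
    (hhess : ∀ v : ι → ℝ[X], (∀ k, (v k).degree ≤ d) →
      0 ≤ L (∑ k, v k ^ 2) + 2 * B (∑ k, u k * v k) (∑ k, u k * v k)) :
    IsCriticalPair L B d (u i) (u j) := by
  classical
  let v (x y : ℝ[X]) (k : ι) : ℝ[X] := if k = i then x else if k = j then y else 0
  have hv {x y : ℝ[X]} (hx : x.natDegree ≤ d) (hy : y.natDegree ≤ d) (k : ι) :
      (v x y k).degree ≤ d := by
    simp only [v]
    split_ifs <;> simp [natDegree_le_iff_degree_le.mp, *]
  have hsum (F : ι → ℝ[X] → ℝ[X]) (hF : ∀ k, F k 0 = 0) (x y : ℝ[X]) :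
      ∑ k, F k (v x y k) = F i x + F j y := by
    rw [Fintype.sum_eq_add i j hij fun k hk => by simp [v, hk.1, hk.2, hF]]
    simp [v, hij.symm]
  have hlin (x y : ℝ[X]) : ∑ k, u k * v x y k = u i * x + u j * y :=
    hsum (fun k z => u k * z) (fun _ => mul_zero _) x y
  refine ⟨fun w hw => ?_, fun w hw => ?_, fun x y hx hy => ?_⟩
  · simpa [hlin] using hgrad (v w 0) (hv hw (by simp))
  · simpa [hlin] using hgrad (v 0 w) (hv (by simp) hw)
  · simpa [hlin, hsum (fun _ z => z ^ 2) (fun _ => zero_pow two_ne_zero)] using hhess _ (hv hx hy)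

end IsCriticalPair

theorem no_spurious_socp_univariate_general
    (d r : ℕ) (hr : 2 ≤ r)
    (B : Polynomial ℝ →ₗ[ℝ] Polynomial ℝ →ₗ[ℝ] ℝ)
    (hpos : ∀ q : Polynomial ℝ, q.degree ≤ (2 * d : ℕ) → q ≠ 0 → 0 < B q q)
    (p : Polynomial ℝ) (hpdeg : p.degree ≤ (2 * d : ℕ))
    (hpnn : ∀ x : ℝ, 0 ≤ p.eval x)
    (u : Fin r → Polynomial ℝ) (hu : ∀ i, (u i).degree ≤ (d : ℕ))
    (hgrad : ∀ v : Fin r → Polynomial ℝ, (∀ i, (v i).degree ≤ (d : ℕ)) →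
      B (∑ i, u i * v i) ((∑ i, (u i) ^ 2) - p) = 0)
    (hhess : ∀ v : Fin r → Polynomial ℝ, (∀ i, (v i).degree ≤ (d : ℕ)) →
      0 ≤ B (∑ i, (v i) ^ 2) ((∑ i, (u i) ^ 2) - p)
        + 2 * B (∑ i, u i * v i) (∑ i, u i * v i)) :
    (∑ i, (u i) ^ 2) = p := by
  set q := (∑ i, u i ^ 2) - p
  have hud (i : Fin r) : (u i).natDegree ≤ d := natDegree_le_iff_degree_le.mpr (hu i)
  have hpair : IsCriticalPair (B.flip q) B d (u ⟨0, by omega⟩) (u ⟨1, by omega⟩) :=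
    .of_sum (by simp) hgrad hhess
  obtain ⟨a, b, hab⟩ := exists_eq_sq_add_sq_of_nonneg hpnn
  have habd : max a.natDegree b.natDegree ≤ d := by
    have := natDegree_le_iff_degree_le.mpr hpdeg
    rw [hab, natDegree_sq_add_sq] at this
    omega
  have hσ : B (∑ i, u i ^ 2) q = 0 := by simpa only [sq] using hgrad u hu
  have hq : B q q ≤ 0 := by
    have ha := hpair.nonneg_sq (hud _) (hud _) (a := a) (by omega)
    have hb := hpair.nonneg_sq (hud _) (hud _) (a := b) (by omega)
    rw [LinearMap.flip_apply] at ha hb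
    calc B q q = B (∑ i, u i ^ 2) q - (B (a ^ 2) q + B (b ^ 2) q) := by
          rw [← LinearMap.add_apply, ← map_add, ← hab, ← LinearMap.sub_apply, ← map_sub]
      _ ≤ 0 := by linarith
  have hσd : (∑ i, u i ^ 2).natDegree ≤ 2 * d :=
    natDegree_sum_le_of_forall_le _ _ fun i _ => natDegree_pow_le_of_le 2 (hud i)
  by_contra hne
  refine (hpos q ?_ (sub_ne_zero.mpr hne)).not_ge hq
  exact (degree_sub_le _ _).trans (max_le (natDegree_le_iff_degree_le.mp hσd) hpdeg)

/-- For all nonnegative univariate polynomials `p` of degree at most `2d` and any `r ≥ 2`,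
any second-order critical point of `f_p(u) = ‖∑ uᵢ² - p‖²` (for any inner product positive
definite on polynomials of degree at most `2d`) satisfies `∑ uᵢ² = p`. -/
theorem no_spurious_socp_univariate
    (d r : ℕ) (hd : 1 ≤ d) (hr : 2 ≤ r)
    (B : Polynomial ℝ →ₗ[ℝ] Polynomial ℝ →ₗ[ℝ] ℝ)
    (hsymm : ∀ a b : Polynomial ℝ, B a b = B b a)
    (hpos : ∀ q : Polynomial ℝ, q.degree ≤ (2 * d : ℕ) → q ≠ 0 → 0 < B q q)
    (p : Polynomial ℝ) (hpdeg : p.degree ≤ (2 * d : ℕ))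
    (hpnn : ∀ x : ℝ, 0 ≤ p.eval x)
    (u : Fin r → Polynomial ℝ) (hu : ∀ i, (u i).degree ≤ (d : ℕ))
    (hgrad : ∀ v : Fin r → Polynomial ℝ, (∀ i, (v i).degree ≤ (d : ℕ)) →
      B (∑ i, u i * v i) ((∑ i, (u i) ^ 2) - p) = 0)
    (hhess : ∀ v : Fin r → Polynomial ℝ, (∀ i, (v i).degree ≤ (d : ℕ)) →
      0 ≤ B (∑ i, (v i) ^ 2) ((∑ i, (u i) ^ 2) - p)
        + 2 * B (∑ i, u i * v i) (∑ i, u i * v i)) :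
    (∑ i, (u i) ^ 2) = p :=
  no_spurious_socp_univariate_general d r hr B hpos p hpdeg hpnn u hu hgrad hhess
end

section
/- Let d₁, d₂ be natural numbers with d₂ + 1 ≥ d₁, and let u₁, u₂ be binary forms of degree d₁. Then u₁ and u₂ are coprime if and only if for every binary form p of degree d₁ + d₂ there exist binary forms v₁, v₂ of degree d₂ such that u₁v₁ + u₂v₂ = p. -/
/-!
If `u₁, u₂` are coprime, unique factorization forces every syzygy `u₁ v₁ + u₂ v₂ = 0` to be a
Koszul one, `(v₁, v₂) = (-u₂ t, u₁ t)`, with `t` a form of degree `d₂ - d₁` (and none at all when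
`d₂ < d₁`). Hence the linear map `(v₁, v₂) ↦ u₁ v₁ + u₂ v₂` from pairs of forms of degree `d₂`,
a space of dimension `2 (d₂ + 1)`, has kernel of dimension at most `d₂ + 1 - d₁`, so its rank is at
least `d₁ + d₂ + 1`, the dimension of the target. Conversely, if `X₀ ^ (d₁ + d₂)` and
`X₁ ^ (d₁ + d₂)` are both of the form `u₁ v₁ + u₂ v₂`, a common divisor of `u₁, u₂` divides these
two coprime monomials.
-/

open MvPolynomial Module

theorem IsRelPrime.exists_eq_of_mul_add_mul_eq_zero {α : Type*} [CommRing α] [IsDomain α]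
    [DecompositionMonoid α] {a b x y : α} (hab : IsRelPrime a b) (ha : a ≠ 0)
    (h : a * x + b * y = 0) : ∃ t, x = -(b * t) ∧ y = a * t := by
  obtain ⟨t, rfl⟩ := hab.dvd_of_dvd_mul_left (z := y) ⟨-x, by linear_combination h⟩
  exact ⟨t, mul_left_cancel₀ ha (by linear_combination h), rfl⟩

namespace MvPolynomial

section Homogeneous

variable {σ R : Type*} [CommRing R] {φ ψ : MvPolynomial σ R} {m n : ℕ}

attribute [local instance] gradedAlgebra in
theorem IsHomogeneous.homogeneousComponent_mul_left (hφ : φ.IsHomogeneous m)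
    (ψ : MvPolynomial σ R) (i : ℕ) :
    homogeneousComponent (m + i) (φ * ψ) = φ * homogeneousComponent i ψ := by
  simpa only [DirectSum.decompose, Equiv.coe_fn_mk, decomposition.decompose'_apply] using
    DirectSum.coe_decompose_mul_add_of_left_mem (homogeneousSubmodule σ R) (b := ψ) hφ

variable [IsDomain R]

theorem IsHomogeneous.of_mul_left (hφ : φ.IsHomogeneous m) (hφ0 : φ ≠ 0)
    (h : (φ * ψ).IsHomogeneous n) : ψ.IsHomogeneous (n - m) := by
  intro d hd
  have hcomp : homogeneousComponent (m + d.degree) (φ * ψ) ≠ 0 := by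
    rw [hφ.homogeneousComponent_mul_left]
    refine mul_ne_zero hφ0 fun h0 => hd ?_
    simpa [coeff_homogeneousComponent] using congr_arg (coeff d) h0
  rw [homogeneousComponent_of_mem h] at hcomp
  have hdeg := (ite_ne_right_iff.mp hcomp).1
  rw [Pi.one_def, ← Finsupp.degree_eq_weight_one]
  omega

theorem IsHomogeneous.le_of_mul_left (hφ : φ.IsHomogeneous m) (h : (φ * ψ).IsHomogeneous n)
    (h0 : φ * ψ ≠ 0) : m ≤ n := by
  rw [← h.totalDegree h0, totalDegree_mul_of_isDomain (left_ne_zero_of_mul h0)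
    (right_ne_zero_of_mul h0), hφ.totalDegree (left_ne_zero_of_mul h0)]
  omega

end Homogeneous

instance {σ R : Type*} [Finite σ] [CommRing R] (n : ℕ) :
    Module.Finite R (homogeneousSubmodule σ R n) :=
  Module.Finite.iff_fg.mpr (homogeneousSubmodule_fg σ R n)

theorem finrank_homogeneousSubmodule {σ K : Type*} [Finite σ] [Field K] (n : ℕ) :
    finrank K (homogeneousSubmodule σ K n) = Nat.card {d : σ →₀ ℕ | d.degree = n} := by
  have := (Finsupp.finite_of_degree_eq (σ := σ) n).fintype
  rw [homogeneousSubmodule_eq_finsupp_supported,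
    (AddMonoidAlgebra.supportedEquivFinsupp _).finrank_eq, finrank_finsupp_self,
    Nat.card_eq_fintype_card]

theorem finrank_homogeneousSubmodule_fin_two {K : Type*} [Field K] (n : ℕ) :
    finrank K (homogeneousSubmodule (Fin 2) K n) = n + 1 := by
  let e : {d : Fin 2 →₀ ℕ | d.degree = n} ≃ Finset.HasAntidiagonal.antidiagonal n :=
    (Finsupp.equivFunOnFinite.trans (finTwoArrowEquiv ℕ)).subtypeEquiv fun d => by
      simp [Finsupp.degree_eq_sum, Fin.sum_univ_two]
  rw [finrank_homogeneousSubmodule, Nat.card_congr e, Nat.card_eq_finsetCard,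
    Finset.Nat.card_antidiagonal]

theorem isRelPrime_X_pow_X_pow {σ R : Type*} [CommRing R] [IsDomain R]
    [UniqueFactorizationMonoid R] {i j : σ} (hij : i ≠ j) (m n : ℕ) :
    IsRelPrime (X i ^ m : MvPolynomial σ R) (X j ^ n) :=
  (X_prime.irreducible.isRelPrime_iff_not_dvd.mpr fun h => hij (X_dvd_X.mp h)).pow

section SylvesterMap

variable {σ R : Type*} [CommRing R] {u₁ u₂ : MvPolynomial σ R} {d : ℕ}
  (h₁ : u₁.IsHomogeneous d) (h₂ : u₂.IsHomogeneous d)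

noncomputable def sylvesterMap (e : ℕ) :
    homogeneousSubmodule σ R e × homogeneousSubmodule σ R e →ₗ[R]
      homogeneousSubmodule σ R (d + e) :=
  LinearMap.codRestrict _
    ((LinearMap.mulLeft R u₁ ∘ₗ (homogeneousSubmodule σ R e).subtype).coprod
      (LinearMap.mulLeft R u₂ ∘ₗ (homogeneousSubmodule σ R e).subtype))
    fun v => (h₁.mul v.1.2).add (h₂.mul v.2.2)

@[simp]
theorem coe_sylvesterMap_apply (e : ℕ)
    (v : homogeneousSubmodule σ R e × homogeneousSubmodule σ R e) :
    (sylvesterMap h₁ h₂ e v : MvPolynomial σ R) = u₁ * v.1 + u₂ * v.2 :=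
  rfl

noncomputable def koszulMap (e : ℕ) :
    homogeneousSubmodule σ R e →ₗ[R]
      homogeneousSubmodule σ R (d + e) × homogeneousSubmodule σ R (d + e) :=
  ((-LinearMap.mulLeft R u₂ ∘ₗ (homogeneousSubmodule σ R e).subtype).codRestrict _
      fun t => (h₂.mul t.2).neg).prod
    ((LinearMap.mulLeft R u₁ ∘ₗ (homogeneousSubmodule σ R e).subtype).codRestrict _
      fun t => h₁.mul t.2)

variable [IsDomain R] [UniqueFactorizationMonoid R]

theorem ker_sylvesterMap_le_range_koszulMap (hu : IsRelPrime u₁ u₂) (hu₁ : u₁ ≠ 0) (k : ℕ) :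
    LinearMap.ker (sylvesterMap h₁ h₂ (d + k)) ≤ LinearMap.range (koszulMap h₁ h₂ k) := by
  rintro ⟨v₁, v₂⟩ hv
  obtain ⟨t, ht₁, ht₂⟩ := hu.exists_eq_of_mul_add_mul_eq_zero hu₁
    (by simpa using congr_arg Subtype.val hv : u₁ * v₁ + u₂ * v₂ = 0)
  have ht : t.IsHomogeneous k :=
    Nat.add_sub_cancel_left d k ▸ h₁.of_mul_left hu₁ (ht₂ ▸ v₂.2)
  exact ⟨⟨t, ht⟩, Prod.ext (Subtype.ext ht₁.symm) (Subtype.ext ht₂.symm)⟩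

theorem ker_sylvesterMap_eq_bot (hu : IsRelPrime u₁ u₂) (hu₁ : u₁ ≠ 0) {e : ℕ} (he : e < d) :
    LinearMap.ker (sylvesterMap h₁ h₂ e) = ⊥ := by
  refine eq_bot_iff.mpr fun v hv => ?_
  obtain ⟨t, ht₁, ht₂⟩ := hu.exists_eq_of_mul_add_mul_eq_zero hu₁
    (by simpa using congr_arg Subtype.val hv : u₁ * v.1 + u₂ * v.2 = 0)
  have ht : t = 0 := by
    refine (mul_eq_zero.mp ?_).resolve_left hu₁
    by_contra h0
    exact absurd (h₁.le_of_mul_left (ht₂ ▸ v.2.2) h0) (by omega)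
  rw [Submodule.mem_bot]
  exact Prod.ext (Subtype.ext (by simp [ht₁, ht])) (Subtype.ext (by simp [ht₂, ht]))

end SylvesterMap

section BinaryForms

variable {K : Type*} [Field K] {u₁ u₂ : MvPolynomial (Fin 2) K} {d e : ℕ}

theorem sylvesterMap_surjective (h₁ : u₁.IsHomogeneous d) (h₂ : u₂.IsHomogeneous d)
    (hde : d ≤ e + 1) (hu : IsRelPrime u₁ u₂) (hu₁ : u₁ ≠ 0) :
    Function.Surjective (sylvesterMap h₁ h₂ e) := by
  have hker : finrank K (LinearMap.ker (sylvesterMap h₁ h₂ e)) + d ≤ e + 1 := by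
    rcases le_or_gt d e with hle | hlt
    · obtain ⟨k, rfl⟩ := Nat.exists_eq_add_of_le hle
      calc finrank K (LinearMap.ker (sylvesterMap h₁ h₂ (d + k))) + d
          ≤ finrank K (LinearMap.range (koszulMap h₁ h₂ k)) + d := by
            gcongr
            exact Submodule.finrank_mono (ker_sylvesterMap_le_range_koszulMap h₁ h₂ hu hu₁ k)
        _ ≤ finrank K (homogeneousSubmodule (Fin 2) K k) + d := by
            gcongr
            exact LinearMap.finrank_range_le _
        _ = d + k + 1 := by rw [finrank_homogeneousSubmodule_fin_two]; ring
    · rw [ker_sylvesterMap_eq_bot h₁ h₂ hu hu₁ hlt, finrank_bot]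
      omega
  have hrank := LinearMap.finrank_range_add_finrank_ker (sylvesterMap h₁ h₂ e)
  have hle := Submodule.finrank_le (LinearMap.range (sylvesterMap h₁ h₂ e))
  rw [finrank_prod, finrank_homogeneousSubmodule_fin_two] at hrank
  rw [finrank_homogeneousSubmodule_fin_two] at hle
  rw [← LinearMap.range_eq_top]
  apply Submodule.eq_top_of_finrank_eq
  rw [finrank_homogeneousSubmodule_fin_two]
  omega

theorem exists_isHomogeneous_mul_add_mul_eq (h₁ : u₁.IsHomogeneous d)
    (h₂ : u₂.IsHomogeneous d) (hde : d ≤ e + 1) (hu : IsRelPrime u₁ u₂)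
    {p : MvPolynomial (Fin 2) K} (hp : p.IsHomogeneous (d + e)) :
    ∃ v₁ v₂, v₁.IsHomogeneous e ∧ v₂.IsHomogeneous e ∧ u₁ * v₁ + u₂ * v₂ = p := by
  wlog hu₁ : u₁ ≠ 0 generalizing u₁ u₂
  · have hu₂ : u₂ ≠ 0 := by
      rintro rfl
      exact not_isRelPrime_zero_zero (not_not.mp hu₁ ▸ hu)
    obtain ⟨v₂, v₁, hv₂, hv₁, hp⟩ := this h₂ h₁ hu.symm hu₂
    exact ⟨v₁, v₂, hv₁, hv₂, by rw [← hp, add_comm]⟩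
  obtain ⟨v, hv⟩ := sylvesterMap_surjective h₁ h₂ hde hu hu₁ ⟨p, hp⟩
  exact ⟨v.1, v.2, v.1.2, v.2.2, congr_arg Subtype.val hv⟩

end BinaryForms

end MvPolynomial

/-- Bézout-type characterization: for binary forms `u₁, u₂` of degree `d₁` and `d₂ + 1 ≥ d₁`,
`u₁` and `u₂` are coprime iff every binary form of degree `d₁ + d₂` is of the form
`u₁ v₁ + u₂ v₂` with `v₁, v₂` binary forms of degree `d₂`. -/
theorem coprime_iff_image_full
    (d₁ d₂ : ℕ) (hd : d₁ ≤ d₂ + 1)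
    (u₁ u₂ : MvPolynomial (Fin 2) ℝ)
    (h₁ : u₁.IsHomogeneous d₁) (h₂ : u₂.IsHomogeneous d₁) :
    (∀ w : MvPolynomial (Fin 2) ℝ, w ∣ u₁ → w ∣ u₂ → IsUnit w) ↔
    (∀ p : MvPolynomial (Fin 2) ℝ, p.IsHomogeneous (d₁ + d₂) →
      ∃ v₁ v₂ : MvPolynomial (Fin 2) ℝ,
        v₁.IsHomogeneous d₂ ∧ v₂.IsHomogeneous d₂ ∧ u₁ * v₁ + u₂ * v₂ = p) := by
  refine ⟨fun hu _ hp => exists_isHomogeneous_mul_add_mul_eq h₁ h₂ hd hu hp,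
    fun h w hw₁ hw₂ => ?_⟩
  obtain ⟨a₁, a₂, -, -, ha⟩ := h _ (isHomogeneous_X_pow 0 (d₁ + d₂))
  obtain ⟨b₁, b₂, -, -, hb⟩ := h _ (isHomogeneous_X_pow 1 (d₁ + d₂))
  exact isRelPrime_X_pow_X_pow (by decide) _ _
    (ha ▸ dvd_add (hw₁.mul_right a₁) (hw₂.mul_right a₂))
    (hb ▸ dvd_add (hw₁.mul_right b₁) (hw₂.mul_right b₂))
end

section
/- Let u₁, u₂ be binary forms of degree d, not both zero. Then there exist natural numbers m, k with m + k ≤ d and binary forms g of degree m, h of degree k, and u₁', u₂' of degree d − m − k such that: u₁ = u₁'·g·h and u₂ = u₂'·g·h; g·h is a greatest common divisor of u₁ and u₂ (g·h divides both u₁ and u₂, and every common divisor of u₁ and u₂ divides g·h); u₁' and u₂' are coprime; g and u₁'² + u₂'² are coprime; and for every (α,β) ∈ ℂ² with (α,β) ≠ (0,0), if h evaluated at (α,β) is 0 (after mapping coefficients into ℂ) then u₁'² + u₂'² evaluated at (α,β) is 0. -/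
/-!
Let `p = gcd u₁ u₂`, so `u₁ = p u₁'`, `u₂ = p u₂'` with `u₁', u₂'` coprime. Splitting the prime
factorisation of `p` according to whether a prime divides `s = u₁'² + u₂'²` gives `p = g h` with
`g` coprime to `s` and `h ∣ sⁿ` for some `n`, so every complex zero of `h` is a zero of `s`.
Homogeneity of all the factors comes from the fact that in a domain a factor of a homogeneous
polynomial is homogeneous: in `p(t • x) = ∑ₙ pₙ(x) tⁿ` the lowest and the highest powers of `t`
add up under multiplication, and for a homogeneous product `a b` both sums equal `deg (a b)`,
so each factor has equal lowest and highest power.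
-/

open MvPolynomial

namespace MvPolynomial

variable {σ R : Type*} [CommSemiring R]

noncomputable def homogeneousExpansion : MvPolynomial σ R →ₐ[R] Polynomial (MvPolynomial σ R) :=
  aeval fun i => Polynomial.C (X i) * Polynomial.X

theorem homogeneousExpansion_monomial (d : σ →₀ ℕ) (r : R) :
    homogeneousExpansion (monomial d r) =
      Polynomial.C (monomial d r) * Polynomial.X ^ d.degree := by
  rw [homogeneousExpansion, aeval_monomial, Finsupp.prod]
  simp only [mul_pow, Finset.prod_mul_distrib, Finset.prod_pow_eq_pow_sum, ← Polynomial.C_pow,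
    ← map_prod]
  rw [monomial_eq, Finsupp.prod, map_mul, Finsupp.degree_apply, Polynomial.algebraMap_apply,
    algebraMap_eq]
  ring

theorem coeff_homogeneousExpansion (p : MvPolynomial σ R) (n : ℕ) :
    (homogeneousExpansion p).coeff n = homogeneousComponent n p := by
  induction p using MvPolynomial.induction_on' with
  | add p q hp hq => simp only [map_add, Polynomial.coeff_add, hp, hq]
  | monomial d r =>
    rw [homogeneousExpansion_monomial, Polynomial.coeff_C_mul_X_pow,
      homogeneousComponent_of_mem (isHomogeneous_monomial r rfl)]

theorem isHomogeneous_of_forall_homogeneousComponent_eq_zero {p : MvPolynomial σ R} {n : ℕ}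
    (h : ∀ i ≠ n, homogeneousComponent i p = 0) : p.IsHomogeneous n := by
  intro d hd
  by_contra hdn
  apply hd
  have := congr_arg (coeff d) (h d.degree (by rwa [Finsupp.degree_eq_weight_one]))
  simpa [coeff_homogeneousComponent] using this

theorem IsHomogeneous.homogeneousExpansion_eq {p : MvPolynomial σ R} {n : ℕ}
    (hp : p.IsHomogeneous n) : homogeneousExpansion p = Polynomial.C p * Polynomial.X ^ n := by
  ext1 m
  rw [coeff_homogeneousExpansion, Polynomial.coeff_C_mul_X_pow, homogeneousComponent_of_mem hp]

theorem isHomogeneous_of_natTrailingDegree_eq_natDegree {p : MvPolynomial σ R}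
    (h : (homogeneousExpansion p).natTrailingDegree = (homogeneousExpansion p).natDegree) :
    p.IsHomogeneous (homogeneousExpansion p).natDegree := by
  refine isHomogeneous_of_forall_homogeneousComponent_eq_zero fun i hi => ?_
  rw [← coeff_homogeneousExpansion]
  rcases hi.lt_or_gt with hlt | hgt
  · exact Polynomial.coeff_eq_zero_of_lt_natTrailingDegree (h ▸ hlt)
  · exact Polynomial.coeff_eq_zero_of_natDegree_lt hgt

theorem IsHomogeneous.exists_of_mul [NoZeroDivisors R] {a b : MvPolynomial σ R} {n : ℕ}
    (h : (a * b).IsHomogeneous n) (hab : a * b ≠ 0) :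
    ∃ i j, i + j = n ∧ a.IsHomogeneous i ∧ b.IsHomogeneous j := by
  have hAB : homogeneousExpansion a * homogeneousExpansion b =
      Polynomial.C (a * b) * Polynomial.X ^ n := by
    rw [← map_mul, h.homogeneousExpansion_eq]
  have hAB0 : homogeneousExpansion a * homogeneousExpansion b ≠ 0 := by
    rw [hAB, Polynomial.C_mul_X_pow_eq_monomial]
    exact (Polynomial.monomial_eq_zero_iff _ _).not.mpr hab
  have hA0 : homogeneousExpansion a ≠ 0 := left_ne_zero_of_mul hAB0
  have hB0 : homogeneousExpansion b ≠ 0 := right_ne_zero_of_mul hAB0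
  have hdeg : (homogeneousExpansion a).natDegree + (homogeneousExpansion b).natDegree = n := by
    rw [← Polynomial.natDegree_mul hA0 hB0, hAB, Polynomial.natDegree_C_mul_X_pow _ _ hab]
  have htrail : (homogeneousExpansion a).natTrailingDegree +
      (homogeneousExpansion b).natTrailingDegree = n := by
    rw [← Polynomial.natTrailingDegree_mul hA0 hB0, hAB, Polynomial.C_mul_X_pow_eq_monomial,
      Polynomial.natTrailingDegree_monomial hab]
  have hA := (homogeneousExpansion a).natTrailingDegree_le_natDegree
  have hB := (homogeneousExpansion b).natTrailingDegree_le_natDegree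
  exact ⟨_, _, hdeg, isHomogeneous_of_natTrailingDegree_eq_natDegree (by omega),
    isHomogeneous_of_natTrailingDegree_eq_natDegree (by omega)⟩

theorem IsHomogeneous.of_mul_left_s3 [NoZeroDivisors R] {a b : MvPolynomial σ R} {m n : ℕ}
    (h : (a * b).IsHomogeneous n) (ha : a.IsHomogeneous m) (ha0 : a ≠ 0) :
    b.IsHomogeneous (n - m) := by
  rcases eq_or_ne b 0 with rfl | hb0
  · exact isHomogeneous_zero _ _ _
  obtain ⟨i, j, hij, hi, hj⟩ := h.exists_of_mul (mul_ne_zero ha0 hb0)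
  obtain rfl := hi.inj_right ha ha0
  rwa [← hij, Nat.add_sub_cancel_left]

theorem IsHomogeneous.exists_of_dvd [NoZeroDivisors R] {p q : MvPolynomial σ R} {n : ℕ}
    (hq : q.IsHomogeneous n) (hq0 : q ≠ 0) (hpq : p ∣ q) : ∃ m ≤ n, p.IsHomogeneous m := by
  obtain ⟨c, rfl⟩ := hpq
  obtain ⟨i, j, hij, hi, -⟩ := hq.exists_of_mul hq0
  exact ⟨i, by omega, hi⟩

end MvPolynomial

theorem UniqueFactorizationMonoid.exists_mul_eq_isRelPrime_dvd_pow {α : Type*}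
    [CommMonoidWithZero α] [UniqueFactorizationMonoid α] (s : α) {p : α} (hp : p ≠ 0) :
    ∃ g h, p = g * h ∧ IsRelPrime g s ∧ ∃ n, h ∣ s ^ n := by
  induction p using WfDvdMonoid.induction_on_irreducible with
  | zero => exact absurd rfl hp
  | unit u hu => exact ⟨u, 1, (mul_one u).symm, hu.isRelPrime_left, 0, one_dvd _⟩
  | mul a i ha hi ih =>
    obtain ⟨g, h, rfl, hg, n, hh⟩ := ih ha
    rcases hi.dvd_or_isRelPrime (n := s) with his | his
    · exact ⟨g, i * h, mul_left_comm i g h, hg, n + 1, pow_succ' s n ▸ mul_dvd_mul his hh⟩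
    · exact ⟨i * g, h, (mul_assoc i g h).symm, his.mul_left hg, n, hh⟩

theorem MvPolynomial.eval_map_eq_zero_of_dvd_pow {σ R S : Type*} [CommSemiring R]
    [CommSemiring S] [IsReduced S] (f : R →+* S) {x : σ → S} {h s : MvPolynomial σ R}
    {n : ℕ} (hdvd : h ∣ s ^ n) (hx : eval x (map f h) = 0) : eval x (map f s) = 0 := by
  have := map_dvd (eval x) (map_dvd (map f) hdvd)
  rw [map_pow, map_pow, hx, zero_dvd_iff] at this
  exact eq_zero_of_pow_eq_zero this

/-- Decomposition of a pair of binary forms: `u₁ = u₁' g h`, `u₂ = u₂' g h` where `g h` is a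
gcd of `u₁, u₂`, `u₁', u₂'` are coprime, `g` is coprime with `u₁'² + u₂'²`, and every complex
root of `h` is a root of `u₁'² + u₂'²`. -/
theorem decomposition_of_pair
    (d : ℕ) (u₁ u₂ : MvPolynomial (Fin 2) ℝ)
    (h₁ : u₁.IsHomogeneous d) (h₂ : u₂.IsHomogeneous d)
    (hne : ¬(u₁ = 0 ∧ u₂ = 0)) :
    ∃ (m k : ℕ) (g h u₁' u₂' : MvPolynomial (Fin 2) ℝ),
      m + k ≤ d ∧
      g.IsHomogeneous m ∧ h.IsHomogeneous k ∧
      u₁'.IsHomogeneous (d - m - k) ∧ u₂'.IsHomogeneous (d - m - k) ∧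
      u₁ = u₁' * g * h ∧ u₂ = u₂' * g * h ∧
      (g * h ∣ u₁ ∧ g * h ∣ u₂ ∧
        ∀ w : MvPolynomial (Fin 2) ℝ, w ∣ u₁ → w ∣ u₂ → w ∣ g * h) ∧
      (∀ w : MvPolynomial (Fin 2) ℝ, w ∣ u₁' → w ∣ u₂' → IsUnit w) ∧
      (∀ w : MvPolynomial (Fin 2) ℝ, w ∣ g → w ∣ (u₁' ^ 2 + u₂' ^ 2) → IsUnit w) ∧
      (∀ α β : ℂ, (α, β) ≠ (0, 0) →
        eval ![α, β] (map (algebraMap ℝ ℂ) h) = 0 →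
        eval ![α, β] (map (algebraMap ℝ ℂ) (u₁' ^ 2 + u₂' ^ 2)) = 0) := by
  let : GCDMonoid (MvPolynomial (Fin 2) ℝ) := UniqueFactorizationMonoid.toGCDMonoid _
  obtain ⟨c₁, c₂, hc₁, hc₂, hc⟩ := extract_gcd u₁ u₂
  have hp0 : gcd u₁ u₂ ≠ 0 := fun h => hne ((gcd_eq_zero_iff _ _).1 h)
  obtain ⟨e, hed, hpe⟩ : ∃ e ≤ d, (gcd u₁ u₂).IsHomogeneous e := by
    rcases not_and_or.1 hne with h0 | h0
    · exact h₁.exists_of_dvd h0 (gcd_dvd_left _ _)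
    · exact h₂.exists_of_dvd h0 (gcd_dvd_right _ _)
  obtain ⟨g, h, hgh, hg, n, hh⟩ :=
    UniqueFactorizationMonoid.exists_mul_eq_isRelPrime_dvd_pow (c₁ ^ 2 + c₂ ^ 2) hp0
  obtain ⟨m, k, hmk, hgm, hhk⟩ := (hgh ▸ hpe).exists_of_mul (hgh ▸ hp0)
  have hcof : ∀ {u c}, u.IsHomogeneous d → u = gcd u₁ u₂ * c → c.IsHomogeneous (d - m - k) :=
    fun hu huc => by rw [Nat.sub_sub, hmk]; exact (huc ▸ hu).of_mul_left_s3 hpe hp0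
  refine ⟨m, k, g, h, c₁, c₂, hmk ▸ hed, hgm, hhk, hcof h₁ hc₁, hcof h₂ hc₂,
    by rw [hc₁, hgh]; ring, by rw [hc₂, hgh]; ring, ?_, gcd_isUnit_iff_isRelPrime.1 hc, hg,
    fun _ _ _ hroot => eval_map_eq_zero_of_dvd_pow _ hh hroot⟩
  rw [← hgh]
  exact ⟨gcd_dvd_left _ _, gcd_dvd_right _ _, fun _ => dvd_gcd⟩
end

section
/- Let u₁', u₂' be coprime binary forms of degree e, and let h be a binary form of degree k such that every (α,β) ∈ ℂ² with (α,β) ≠ (0,0) at which h vanishes (after mapping coefficients into ℂ) is also a zero of u₁'² + u₂'². Then: (1) for every (α,β) ∈ ℝ² with (α,β) ≠ (0,0), (u₁'² + u₂'²)(α,β) ≠ 0; (2) for every (α,β) ∈ ℝ² with (α,β) ≠ (0,0), h(α,β) ≠ 0; and (3) k is even. -/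
/-!
A real zero `x ≠ 0` of `u₁'² + u₂'²` is a common zero of `u₁'` and `u₂'`. Modulo the linear form
`x₁X₀ - x₀X₁` the variables are proportional to `x`, so by homogeneity every binary form vanishing
at `x` is divisible by it; hence `u₁'` and `u₂'` would share a non-unit factor. A real zero of `h`
would then be a complex zero of `h` at which `u₁'² + u₂'²` does not vanish. Finally, a real form
of odd degree takes opposite values at `v` and `-v`, so it vanishes somewhere on the connected set
`ℝ² \ {0}`.
-/

open MvPolynomial

theorem Module.one_lt_rank_fun (R σ : Type*) [Semiring R] [Nontrivial R] [Nontrivial σ] :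
    1 < Module.rank R (σ → R) := by
  classical
  have hle := (Pi.linearIndependent_single_one σ R).cardinal_lift_le_rank
  have hσ : 1 < Cardinal.lift.{_} (Cardinal.mk σ) := by
    simpa using Cardinal.one_lt_iff_nontrivial.mpr ‹Nontrivial σ›
  exact Cardinal.one_lt_lift_iff.mp (hσ.trans_le hle)

section

variable {σ : Type*} {n : ℕ}

theorem MvPolynomial.IsHomogeneous.aeval_smul {R A : Type*} [CommSemiring R] [CommSemiring A]
    [Algebra R A] {p : MvPolynomial σ R} (hp : p.IsHomogeneous n) (c : A) (v : σ → A) :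
    MvPolynomial.aeval (c • v) p = c ^ n * MvPolynomial.aeval v p := by
  rw [aeval_def, aeval_def, eval₂_eq, eval₂_eq, Finset.mul_sum]
  refine Finset.sum_congr rfl fun d hd => ?_
  have hdeg : ∑ i ∈ d.support, d i = n := by
    simpa [Finsupp.weight_apply, Finsupp.sum] using hp (mem_support_iff.mp hd)
  simp only [Pi.smul_apply, smul_eq_mul, mul_pow, Finset.prod_mul_distrib,
    Finset.prod_pow_eq_pow_sum, hdeg]
  ring

theorem MvPolynomial.IsHomogeneous.mem_span_minors_of_eval_eq_zero {K : Type*} [Field K]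
    {p : MvPolynomial σ K} (hp : p.IsHomogeneous n) {x : σ → K} (hx : x ≠ 0)
    (h0 : eval x p = 0) :
    p ∈ Ideal.span (Set.range fun ij : σ × σ => C (x ij.1) * X ij.2 - C (x ij.2) * X ij.1) := by
  set I := Ideal.span (Set.range fun ij : σ × σ => C (x ij.1) * X ij.2 - C (x ij.2) * X ij.1)
  obtain ⟨i, hi⟩ := Function.ne_iff.mp hx
  let π := Ideal.Quotient.mkₐ K I
  -- Modulo `I` the vector of variables is a multiple of `x`, so `p ≡ c ^ n * p(x) = 0`.
  have hX : (fun j => π (X j)) =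
      (π (X i) * algebraMap K _ (x i)⁻¹) • (algebraMap K _ ∘ x) := by
    funext j
    have hij : π (C (x i) * X j - C (x j) * X i) = 0 :=
      Ideal.Quotient.eq_zero_iff_mem.mpr (Ideal.subset_span ⟨(i, j), rfl⟩)
    have hinv : algebraMap K (MvPolynomial σ K ⧸ I) (x i)⁻¹ * algebraMap K _ (x i) = 1 := by
      rw [← map_mul, inv_mul_cancel₀ hi, map_one]
    simp only [map_sub, map_mul, ← algebraMap_eq, AlgHom.commutes] at hij
    simp only [Pi.smul_apply, Function.comp_apply, smul_eq_mul]
    linear_combination (algebraMap K _ (x i)⁻¹) * hij - π (X j) * hinv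
  rw [← Ideal.Quotient.eq_zero_iff_mem]
  calc Ideal.Quotient.mk I p = MvPolynomial.aeval (fun j => π (X j)) p :=
        DFunLike.congr_fun (aeval_unique π) p
    _ = 0 := by
      rw [hX, hp.aeval_smul, aeval_algebraMap_apply, aeval_eq_eval, h0, map_zero, mul_zero]

theorem MvPolynomial.IsHomogeneous.exists_eval_eq_zero_of_odd [Nontrivial σ]
    {p : MvPolynomial σ ℝ} (hp : p.IsHomogeneous n) (hn : Odd n) : ∃ x ≠ 0, eval x p = 0 := by
  have hconn :=
    (isConnected_compl_singleton_of_one_lt_rank (Module.one_lt_rank_fun ℝ σ) 0).isPreconnected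
  have hcont := (continuous_eval p).continuousOn (s := {0}ᶜ)
  obtain ⟨v, hv⟩ := exists_ne (0 : σ → ℝ)
  have hneg : eval (-v) p = -eval v p := by
    simpa [hn.neg_one_pow] using hp.aeval_smul (-1 : ℝ) v
  rcases le_total (eval v p) 0 with hle | hge
  · exact hconn.intermediate_value hv (neg_ne_zero.mpr hv) hcont ⟨hle, by linarith⟩
  · exact hconn.intermediate_value (neg_ne_zero.mpr hv) hv hcont ⟨by linarith, hge⟩

variable {K : Type*} [Field K]

theorem MvPolynomial.IsHomogeneous.linearForm_dvd_of_eval_eq_zero {p : MvPolynomial (Fin 2) K}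
    (hp : p.IsHomogeneous n) {x : Fin 2 → K} (hx : x ≠ 0) (h0 : eval x p = 0) :
    C (x 1) * X 0 - C (x 0) * X 1 ∣ p := by
  rw [← Ideal.mem_span_singleton]
  refine Ideal.span_le.mpr ?_ (hp.mem_span_minors_of_eval_eq_zero hx h0)
  rintro _ ⟨⟨i, j⟩, rfl⟩
  rw [SetLike.mem_coe, Ideal.mem_span_singleton]
  fin_cases i <;> fin_cases j
  · exact ⟨0, by simp⟩
  · exact ⟨-1, by simp⟩
  · exact ⟨1, by simp⟩
  · exact ⟨0, by simp⟩

theorem MvPolynomial.not_isRelPrime_of_eval_eq_zero {m : ℕ} {u₁ u₂ : MvPolynomial (Fin 2) K}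
    (h₁ : u₁.IsHomogeneous m) (h₂ : u₂.IsHomogeneous n) {x : Fin 2 → K} (hx : x ≠ 0)
    (e₁ : eval x u₁ = 0) (e₂ : eval x u₂ = 0) : ¬IsRelPrime u₁ u₂ := by
  intro hrel
  have hunit := (hrel (h₁.linearForm_dvd_of_eval_eq_zero hx e₁)
    (h₂.linearForm_dvd_of_eval_eq_zero hx e₂)).map (eval x)
  simp [mul_comm] at hunit

end

/-- In the decomposition of a pair of binary forms, both `u₁'² + u₂'²` and `h` have no real
roots and `deg h` is even. -/
theorem no_real_roots_and_even_degree
    (e k : ℕ) (u₁' u₂' h : MvPolynomial (Fin 2) ℝ)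
    (h₁ : u₁'.IsHomogeneous e) (h₂ : u₂'.IsHomogeneous e)
    (hcop : ∀ w : MvPolynomial (Fin 2) ℝ, w ∣ u₁' → w ∣ u₂' → IsUnit w)
    (hh : h.IsHomogeneous k)
    (hroots : ∀ α β : ℂ, (α, β) ≠ (0, 0) →
      eval ![α, β] (map (algebraMap ℝ ℂ) h) = 0 →
      eval ![α, β] (map (algebraMap ℝ ℂ) (u₁' ^ 2 + u₂' ^ 2)) = 0) :
    (∀ α β : ℝ, (α, β) ≠ (0, 0) → eval ![α, β] (u₁' ^ 2 + u₂' ^ 2) ≠ 0) ∧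
    (∀ α β : ℝ, (α, β) ≠ (0, 0) → eval ![α, β] h ≠ 0) ∧
    Even k := by
  have hsq : ∀ α β : ℝ, (α, β) ≠ (0, 0) → eval ![α, β] (u₁' ^ 2 + u₂' ^ 2) ≠ 0 := by
    intro α β hαβ h0
    rw [map_add, map_pow, map_pow] at h0
    obtain ⟨e₁, e₂⟩ := (add_eq_zero_iff_of_nonneg (sq_nonneg _) (sq_nonneg _)).mp h0
    exact not_isRelPrime_of_eval_eq_zero h₁ h₂ (by simpa using hαβ) (sq_eq_zero_iff.mp e₁)
      (sq_eq_zero_iff.mp e₂) fun w => hcop w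
  have hreal : ∀ α β : ℝ, (α, β) ≠ (0, 0) → eval ![α, β] h ≠ 0 := by
    intro α β hαβ h0
    have hcomp : ![(α : ℂ), (β : ℂ)] = algebraMap ℝ ℂ ∘ ![α, β] := by
      ext i; fin_cases i <;> rfl
    have hC := hroots α β (by simpa using hαβ) (by rw [hcomp, ← map_eval, h0, map_zero])
    rw [hcomp, ← map_eval, map_eq_zero_iff _ (algebraMap ℝ ℂ).injective] at hC
    exact hsq α β hαβ hC
  refine ⟨hsq, hreal, Nat.not_odd_iff_even.mp fun hodd => ?_⟩
  obtain ⟨x, hx, hx0⟩ := hh.exists_eval_eq_zero_of_odd hodd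
  have hxvec : ![x 0, x 1] = x := by
    ext i; fin_cases i <;> rfl
  exact hreal (x 0) (x 1) (by rw [← hxvec] at hx; simpa using hx) (by rwa [hxvec])
end

section
/- Let g, a ∈ ℝ[x] be coprime univariate polynomials with g ≠ 0. If a(x) > 0 for every x ∈ ℝ with g(x) = 0, then there exists a polynomial t ∈ ℝ[x] with deg t < deg g such that g divides a − t². -/
open Polynomial

/-!
Modulo an irreducible `p ∈ ℝ[X]` with complex root `z`, divisibility by `p` is vanishing at `z`,
so `a` is a square modulo `p` as soon as `a(z)` is a square in the image of evaluation at `z`: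
this holds for real `z` because `a(z) > 0`, and for non-real `z` because evaluation at `z` is then
onto `ℂ`. Coprimality makes `2t` invertible modulo `p`, so Hensel lifting gives square roots modulo
every power of `p`, and the Chinese remainder theorem glues them along the factorization of `g`.
Reducing the square root modulo `g` bounds its degree.
-/

section CommRing

variable {R : Type*} [CommRing R]

def IsSquareMod (g a : R) : Prop := ∃ t, g ∣ a - t ^ 2

lemma dvd_sub_sq_of_dvd_sub {g a s t : R} (hs : g ∣ a - s ^ 2) (hst : g ∣ s - t) :
    g ∣ a - t ^ 2 := by
  have : a - t ^ 2 = (a - s ^ 2) + (s - t) * (s + t) := by ring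
  exact this ▸ dvd_add hs (dvd_mul_of_dvd_left hst _)

lemma IsSquareMod.of_isUnit {g : R} (hg : IsUnit g) (a : R) : IsSquareMod g a := ⟨0, hg.dvd⟩

lemma IsSquareMod.mul_of_isCoprime {g h a : R} (hgh : IsCoprime g h) (hg : IsSquareMod g a)
    (hh : IsSquareMod h a) : IsSquareMod (g * h) a := by
  obtain ⟨t₁, ht₁⟩ := hg
  obtain ⟨t₂, ht₂⟩ := hh
  obtain ⟨b, c, hbc⟩ := hgh
  refine ⟨t₁ * c * h + t₂ * b * g, IsCoprime.mul_dvd ⟨b, c, hbc⟩ ?_ ?_⟩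
  · exact dvd_sub_sq_of_dvd_sub ht₁ ⟨(t₁ - t₂) * b, by linear_combination -t₁ * hbc⟩
  · exact dvd_sub_sq_of_dvd_sub ht₂ ⟨(t₂ - t₁) * c, by linear_combination -t₂ * hbc⟩

lemma isCoprime_two_mul_of_dvd_sub_sq {p a t : R} (h2 : IsUnit (2 : R)) (hcop : IsCoprime p a)
    (ht : p ∣ a - t ^ 2) : IsCoprime p (2 * t) := by
  obtain ⟨k, hk⟩ := ht
  have hsq : IsCoprime p (t ^ 2) := by
    convert hcop.add_mul_left_right (-k) using 1
    linear_combination -hk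
  exact (isCoprime_one_right.of_isCoprime_of_dvd_right h2.dvd).mul_right
    ((IsCoprime.pow_right_iff two_pos).1 hsq)

/-- Hensel's lemma for `T ^ 2 - a`: the lift is the Newton step `t + (a - t ^ 2) * c`, where `c`
inverts `2 * t` modulo `p`. -/
lemma exists_sq_mod_pow_succ_succ {p a t : R} {n : ℕ} (hcop : IsCoprime p (2 * t))
    (ht : p ^ (n + 1) ∣ a - t ^ 2) : ∃ s, IsCoprime p (2 * s) ∧ p ^ (n + 2) ∣ a - s ^ 2 := by
  obtain ⟨u, hu⟩ := ht
  obtain ⟨b, c, hbc⟩ := hcop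
  refine ⟨t + p ^ (n + 1) * (c * u), ?_, u * b - p ^ n * (c * u) ^ 2, ?_⟩
  · convert IsCoprime.add_mul_left_right ⟨b, c, hbc⟩ (2 * p ^ n * (c * u)) using 1
    ring
  · linear_combination hu - p ^ (n + 1) * u * hbc

lemma IsSquareMod.pow {p a : R} (h2 : IsUnit (2 : R)) (hcop : IsCoprime p a)
    (h : IsSquareMod p a) : ∀ n : ℕ, IsSquareMod (p ^ n) a
  | 0 => .of_isUnit (by simp) a
  | n + 1 => by
    obtain ⟨t, ht⟩ := h
    suffices ∃ s, IsCoprime p (2 * s) ∧ p ^ (n + 1) ∣ a - s ^ 2 by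
      obtain ⟨s, -, hs⟩ := this
      exact ⟨s, hs⟩
    induction n with
    | zero => exact ⟨t, isCoprime_two_mul_of_dvd_sub_sq h2 hcop ht, by simpa using ht⟩
    | succ n ih =>
      obtain ⟨s, hs, hsn⟩ := ih
      exact exists_sq_mod_pow_succ_succ hs hsn

end CommRing

lemma exists_aeval_eq_of_im_ne_zero {z : ℂ} (hz : z.im ≠ 0) (w : ℂ) :
    ∃ t : ℝ[X], aeval z t = w := by
  refine ⟨C (w.im / z.im) * (X - C z.re) + C w.re, ?_⟩
  apply Complex.ext <;> simp [hz]

lemma isSquareMod_of_irreducible {p a : ℝ[X]} (hp : Irreducible p)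
    (hpos : ∀ x : ℝ, p.eval x = 0 → 0 < a.eval x) : IsSquareMod p a := by
  obtain ⟨z, hz⟩ : ∃ z : ℂ, aeval z p = 0 :=
    IsAlgClosed.exists_aeval_eq_zero ℂ p (degree_pos_of_irreducible hp).ne'
  suffices ∃ t : ℝ[X], aeval z a = aeval z t ^ 2 by
    obtain ⟨t, ht⟩ := this
    exact ⟨t, (hp.dvd_iff_aeval_eq_zero hz).1 (by simp [ht])⟩
  by_cases hre : z.im = 0
  · obtain ⟨r, rfl⟩ : ∃ r : ℝ, (r : ℂ) = z := ⟨z.re, Complex.ext (by simp) (by simp [hre])⟩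
    have aeval_ofReal (q : ℝ[X]) : aeval (r : ℂ) q = q.eval r := aeval_algebraMap_apply ℂ r q
    have hroot : p.eval r = 0 := by exact_mod_cast aeval_ofReal p ▸ hz
    refine ⟨C √(a.eval r), ?_⟩
    rw [aeval_ofReal, aeval_ofReal, eval_C, ← Complex.ofReal_pow, Real.sq_sqrt (hpos r hroot).le]
  · obtain ⟨w, hw⟩ := IsAlgClosed.exists_eq_mul_self (aeval z a)
    obtain ⟨t, ht⟩ := exists_aeval_eq_of_im_ne_zero hre w
    exact ⟨t, by rw [ht, hw, sq]⟩

lemma isSquareMod_of_isCoprime_of_pos_on_roots {g a : ℝ[X]} (hcop : IsCoprime g a)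
    (hpos : ∀ x : ℝ, g.eval x = 0 → 0 < a.eval x) : IsSquareMod g a := by
  induction g using UniqueFactorizationMonoid.induction_on_coprime with
  | h0 =>
    obtain ⟨c, -, rfl⟩ := Polynomial.isUnit_iff.1 (isCoprime_zero_left.1 hcop)
    have hc : 0 < c := by simpa using hpos 0 eval_zero
    refine ⟨C √c, ?_⟩
    simp [← C_pow, Real.sq_sqrt hc.le]
  | h1 hu => exact .of_isUnit hu a
  | @hpr p i hp =>
    cases i with
    | zero => exact .of_isUnit (by simp) a
    | succ i =>
      have h2 : IsUnit (2 : ℝ[X]) := by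
        rw [← C_ofNat]
        exact isUnit_C.2 two_ne_zero.isUnit
      refine .pow h2 (hcop.of_isCoprime_of_dvd_left (dvd_pow_self p i.succ_ne_zero)) ?_ _
      exact isSquareMod_of_irreducible hp.irreducible fun x hx ↦ hpos x (by simp [hx])
  | hcp hxy hx hy =>
    refine .mul_of_isCoprime (isRelPrime_iff_isCoprime.1 hxy) ?_ ?_
    · exact hx hcop.of_mul_left_left fun x hx ↦ hpos x (by simp [hx])
    · exact hy hcop.of_mul_left_right fun x hx ↦ hpos x (by simp [hx])

/-- If `a` is coprime with `g` and strictly positive on the real roots of `g`, then `a` is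
congruent to a single square modulo `g`, with the square root of degree less than `deg g`. -/
theorem square_mod_of_pos_on_roots
    (g a : Polynomial ℝ) (hg : g ≠ 0)
    (hcop : IsCoprime g a)
    (hpos : ∀ x : ℝ, g.eval x = 0 → 0 < a.eval x) :
    ∃ t : Polynomial ℝ, t.degree < g.degree ∧ g ∣ (a - t ^ 2) := by
  obtain ⟨t, ht⟩ := isSquareMod_of_isCoprime_of_pos_on_roots hcop hpos
  refine ⟨t % g, degree_mod_lt t hg, dvd_sub_sq_of_dvd_sub ht ?_⟩
  rw [EuclideanDomain.mod_eq_sub_mul_div, sub_sub_cancel]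
  exact dvd_mul_right _ _
end

section
/- Let d ≥ m ≥ 0 be natural numbers. Let g be a binary form of degree m, let q be a sum of squares of binary forms of degree d − m (so q is a binary form of degree 2d − 2m), and let p be a sum of squares of binary forms of degree d (so p is a binary form of degree 2d). If g and q are coprime, then there exist a finite family s₁,…,s_N of binary forms of degree m and a binary form t of degree 2d − m such that p = (∑ᵢ sᵢ²)·q + t·g. -/
/-!
Shear `y ↦ y + c x` with `g(1, c) ≠ 0` and dehomogenize at `y = 1`: then `G = g(x, 1)` has degree
exactly `m` and is coprime to `Q = q(x, 1)`, so `B Q ≡ 1 (mod G)` for some `B`. With `p = ∑ tᵢ²` and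
`q = ∑ uⱼ²`, modulo `G` we get `p ≡ p (B Q)² = ∑ (tᵢ uⱼ B)² Q`, and reducing `tᵢ uⱼ B` modulo `G`
leaves polynomials of degree `< m`. Their homogenizations of degree `m` are the `sᵢ`, and the
quotient of `p - (∑ sᵢ²) q` by `G` homogenizes to `t`: forms of equal degree with equal
dehomogenizations are equal. If `g = 0`, coprimality makes `q` a positive constant and `d = m`.
-/

open MvPolynomial

lemma sum_sq_eq_sum_sq_mul_of_mul_eq_one {A ι κ : Type*} [CommSemiring A] [Fintype ι] [Fintype κ]
    (t : ι → A) (u : κ → A) {b : A} (hb : b * ∑ j, u j ^ 2 = 1) :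
    ∑ i, t i ^ 2 = (∑ ij : ι × κ, (t ij.1 * u ij.2 * b) ^ 2) * ∑ j, u j ^ 2 :=
  calc ∑ i, t i ^ 2 = (∑ i, t i ^ 2) * (b * ∑ j, u j ^ 2) ^ 2 := by rw [hb, one_pow, mul_one]
    _ = _ := by
      simp only [Fintype.sum_prod_type, mul_pow, ← Finset.sum_mul, ← Finset.mul_sum]
      ring

lemma Polynomial.exists_sum_sq_mul_dvd_sub {K ι κ : Type*} [Field K] [Fintype ι] [Fintype κ]
    {G : Polynomial K} (hG : G ≠ 0) (T : ι → Polynomial K) (U : κ → Polynomial K)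
    (hGU : IsCoprime G (∑ j, U j ^ 2)) :
    ∃ S : ι × κ → Polynomial K, (∀ ij, (S ij).degree < G.degree) ∧
      G ∣ ∑ i, T i ^ 2 - (∑ ij, S ij ^ 2) * ∑ j, U j ^ 2 := by
  obtain ⟨A, B, hAB⟩ := hGU
  refine ⟨fun ij => T ij.1 * U ij.2 * B % G, fun _ => Polynomial.degree_mod_lt _ hG, ?_⟩
  have hB : AdjoinRoot.mk G B * ∑ j, AdjoinRoot.mk G (U j) ^ 2 = 1 := by
    simpa using congrArg (AdjoinRoot.mk G) hAB
  have hmod (f : Polynomial K) : AdjoinRoot.mk G (f % G) = AdjoinRoot.mk G f :=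
    AdjoinRoot.mk_eq_mk.mpr ⟨-(f / G), by rw [EuclideanDomain.mod_eq_sub_mul_div]; ring⟩
  rw [← AdjoinRoot.mk_eq_mk]
  simpa only [map_sum, map_mul, map_pow, hmod] using
    sum_sq_eq_sum_sq_mul_of_mul_eq_one _ _ hB

namespace BinaryForm

section CommSemiring

variable {R : Type*} [CommSemiring R] {F : MvPolynomial (Fin 2) R} {n : ℕ}

noncomputable def dehomogenize : MvPolynomial (Fin 2) R →ₐ[R] Polynomial R :=
  aeval ![Polynomial.X, 1]

lemma dehomogenize_homogenize {p : Polynomial R} (hp : p.natDegree ≤ n) :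
    dehomogenize (p.homogenize n) = p :=
  Polynomial.aeval_homogenize_X_one p hp

lemma homogenize_dehomogenize (hF : F.IsHomogeneous n) : (dehomogenize F).homogenize n = F :=
  Polynomial.homogenize_eq_of_isHomogeneous hF rfl

lemma dehomogenize_monomial (u : Fin 2 →₀ ℕ) (a : R) :
    dehomogenize (monomial u a) = Polynomial.C a * Polynomial.X ^ u 0 := by
  simp [dehomogenize, aeval_monomial, Finsupp.prod_fintype, Fin.prod_univ_two]

lemma add_eq_of_mem_support (hF : F.IsHomogeneous n) {u : Fin 2 →₀ ℕ} (hu : u ∈ F.support) :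
    u 0 + u 1 = n := by
  simpa [Finsupp.weight_apply, Finsupp.sum_fintype] using hF (mem_support_iff.mp hu)

lemma natDegree_dehomogenize_le (hF : F.IsHomogeneous n) : (dehomogenize F).natDegree ≤ n := by
  rw [F.as_sum, map_sum]
  refine Polynomial.natDegree_sum_le_of_forall_le _ _ fun u hu => ?_
  rw [dehomogenize_monomial]
  have := add_eq_of_mem_support hF hu
  exact (Polynomial.natDegree_C_mul_X_pow_le _ _).trans (by omega)

lemma coeff_dehomogenize_eq_eval (hF : F.IsHomogeneous n) :
    (dehomogenize F).coeff n = eval ![1, 0] F := by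
  conv_lhs => rw [F.as_sum]
  conv_rhs => rw [F.as_sum]
  simp only [map_sum, Polynomial.finsetSum_coeff, dehomogenize_monomial, eval_monomial,
    Polynomial.coeff_C_mul_X_pow, Finsupp.prod_fintype _ _ (fun _ => pow_zero _), Fin.prod_univ_two]
  refine Finset.sum_congr rfl fun u hu => ?_
  have := add_eq_of_mem_support hF hu
  by_cases h : u 1 = 0
  · simp [h, show n = u 0 by omega]
  · simp [h, show n ≠ u 0 by omega]

lemma eval_dehomogenize_rename_swap (c : R) :
    (dehomogenize (rename (Equiv.swap 0 1) F)).eval c = eval ![1, c] F := by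
  induction F using MvPolynomial.induction_on with
  | C a => simp
  | add p q hp hq => simp [hp, hq]
  | mul_X p i hp =>
    simp only [map_mul, Polynomial.eval_mul, hp]
    fin_cases i <;> simp [dehomogenize]

end CommSemiring

section CommRing

variable {R : Type*} [CommRing R] [IsDomain R] {F : MvPolynomial (Fin 2) R} {n : ℕ}

lemma homogenize_natDegree_dvd_of_dvd_dehomogenize (hF : F.IsHomogeneous n) {W : Polynomial R}
    (hW : W ∣ dehomogenize F) : W.homogenize W.natDegree ∣ F := by
  set P := dehomogenize F
  have hP : F = P.homogenize P.natDegree * MvPolynomial.X 1 ^ (n - P.natDegree) := by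
    rw [← Polynomial.homogenize_one, ← Polynomial.homogenize_mul P 1 le_rfl
      (Polynomial.natDegree_one.trans_le (Nat.zero_le _)), mul_one,
      Nat.add_sub_cancel' (natDegree_dehomogenize_le hF), homogenize_dehomogenize hF]
  rw [hP]
  exact (Polynomial.homogenize_dvd hW).mul_right _

lemma exists_eq_mul_of_dehomogenize_dvd {g : MvPolynomial (Fin 2) R} {m : ℕ}
    (hF : F.IsHomogeneous n) (hg : g.IsHomogeneous m) (hgdeg : (dehomogenize g).degree = m)
    (hdvd : dehomogenize g ∣ dehomogenize F) :
    ∃ τ : MvPolynomial (Fin 2) R, τ.IsHomogeneous (n - m) ∧ F = τ * g := by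
  obtain ⟨H, hH⟩ := hdvd
  rcases eq_or_ne H 0 with rfl | hH0
  · refine ⟨0, isHomogeneous_zero _ _ _, ?_⟩
    rw [zero_mul, ← homogenize_dehomogenize hF, hH, mul_zero, Polynomial.homogenize_zero]
  have hg0 : dehomogenize g ≠ 0 := Polynomial.ne_zero_of_coe_le_degree hgdeg.ge
  have hgm : (dehomogenize g).natDegree = m := Polynomial.natDegree_eq_of_degree_eq_some hgdeg
  have hdeg : m + H.natDegree ≤ n := by
    rw [← hgm, ← Polynomial.natDegree_mul hg0 hH0, ← hH]
    exact natDegree_dehomogenize_le hF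
  refine ⟨H.homogenize (n - m), Polynomial.isHomogeneous_homogenize _, ?_⟩
  have key := Polynomial.homogenize_mul _ _ hgm.le (show H.natDegree ≤ n - m by omega)
  rw [Nat.add_sub_cancel' (by omega), ← hH, homogenize_dehomogenize hF,
    homogenize_dehomogenize hg] at key
  rw [key, mul_comm]

end CommRing

lemma isCoprime_dehomogenize {K : Type*} [Field K] {g q : MvPolynomial (Fin 2) K} {m n : ℕ}
    (hg : g.IsHomogeneous m) (hq : q.IsHomogeneous n) (hgq : IsRelPrime g q) :
    IsCoprime (dehomogenize g) (dehomogenize q) := by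
  classical
  rw [← EuclideanDomain.gcd_isUnit_iff]
  simpa [dehomogenize_homogenize] using
    (hgq (homogenize_natDegree_dvd_of_dvd_dehomogenize hg (EuclideanDomain.gcd_dvd_left _ _))
      (homogenize_natDegree_dvd_of_dvd_dehomogenize hq (EuclideanDomain.gcd_dvd_right _ _))).map
      dehomogenize

section Shear

variable {R : Type*} [CommRing R]

noncomputable def shear (c : R) : MvPolynomial (Fin 2) R ≃ₐ[R] MvPolynomial (Fin 2) R :=
  AlgEquiv.ofAlgHom (aeval ![X 0, X 1 + C c * X 0]) (aeval ![X 0, X 1 + C (-c) * X 0])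
    (by ext i : 1; fin_cases i <;> simp) (by ext i : 1; fin_cases i <;> simp)

lemma shear_symm (c : R) : (shear c).symm = shear (-c) := by
  ext F : 1
  simp [shear]

lemma isHomogeneous_shear {F : MvPolynomial (Fin 2) R} {n : ℕ} (hF : F.IsHomogeneous n) (c : R) :
    (shear c F).IsHomogeneous n := by
  refine (one_mul n).subst (hF.aeval _ fun i => ?_)
  fin_cases i
  · simpa using isHomogeneous_X R 0
  · simpa using (isHomogeneous_X R 1).add (isHomogeneous_C_mul_X c 0)

lemma eval_shear (v : Fin 2 → R) (c : R) (F : MvPolynomial (Fin 2) R) :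
    eval v (shear c F) = eval ![v 0, v 1 + c * v 0] F := by
  induction F using MvPolynomial.induction_on with
  | C a => simp [shear]
  | add p q hp hq => simp [hp, hq]
  | mul_X p i hp =>
    simp only [map_mul, hp]
    fin_cases i <;> simp [shear]

end Shear

lemma exists_degree_dehomogenize_shear_eq {K : Type*} [Field K] [Infinite K]
    {g : MvPolynomial (Fin 2) K} {m : ℕ} (hg : g.IsHomogeneous m) (hg0 : g ≠ 0) :
    ∃ c : K, (dehomogenize (shear c g)).degree = m := by
  have hswap : (rename (Equiv.swap (0 : Fin 2) 1) g).IsHomogeneous m := hg.rename_isHomogeneous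
  have hP : dehomogenize (rename (Equiv.swap 0 1) g) ≠ 0 := fun h =>
    hg0 <| rename_injective _ (Equiv.swap (0 : Fin 2) 1).injective <| by
      rw [← homogenize_dehomogenize hswap, h, Polynomial.homogenize_zero, map_zero]
  obtain ⟨c, hc⟩ : ∃ c, eval ![1, c] g ≠ 0 := by
    by_contra! h
    exact hP (Polynomial.funext (by simpa [eval_dehomogenize_rename_swap] using h))
  have hgc := isHomogeneous_shear hg c
  refine ⟨c, Polynomial.degree_eq_of_le_of_coeff_ne_zero
    (Polynomial.degree_le_of_natDegree_le (natDegree_dehomogenize_le hgc)) ?_⟩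
  simpa [coeff_dehomogenize_eq_eval hgc, eval_shear] using hc

def IsSumSqForms {σ R : Type*} [CommSemiring R] (k : ℕ) (p : MvPolynomial σ R) : Prop :=
  ∃ (N : ℕ) (t : Fin N → MvPolynomial σ R), (∀ i, (t i).IsHomogeneous k) ∧ p = ∑ i, t i ^ 2

section IsSumSqForms

variable {σ R : Type*} [CommSemiring R] {k : ℕ} {p : MvPolynomial σ R}

lemma isSumSqForms_sum {ι : Type*} [Fintype ι] (t : ι → MvPolynomial σ R)
    (ht : ∀ i, (t i).IsHomogeneous k) : IsSumSqForms k (∑ i, t i ^ 2) := by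
  let e := Fintype.equivFin ι
  exact ⟨_, t ∘ e.symm, fun i => ht _, (e.symm.sum_comp fun i => t i ^ 2).symm⟩

lemma IsSumSqForms.isHomogeneous (hp : IsSumSqForms k p) : p.IsHomogeneous (2 * k) := by
  obtain ⟨N, t, ht, rfl⟩ := hp
  exact IsHomogeneous.sum _ _ _ fun i _ => mul_comm k 2 ▸ (ht i).pow 2

lemma IsSumSqForms.map {τ : Type*} (hp : IsSumSqForms k p)
    (f : MvPolynomial σ R →+* MvPolynomial τ R)
    (hf : ∀ F : MvPolynomial σ R, F.IsHomogeneous k → (f F).IsHomogeneous k) :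
    IsSumSqForms k (f p) := by
  obtain ⟨N, t, ht, rfl⟩ := hp
  exact ⟨N, fun i => f (t i), fun i => hf _ (ht i), by simp⟩

end IsSumSqForms

section Real

variable {σ : Type*} {k : ℕ} {p : MvPolynomial σ ℝ}

lemma IsSumSqForms.C_mul (hp : IsSumSqForms k p) {c : ℝ} (hc : 0 ≤ c) :
    IsSumSqForms k (C c * p) := by
  obtain ⟨N, t, ht, rfl⟩ := hp
  refine ⟨N, fun i => C √c * t i, fun i => by simpa using (ht i).C_mul √c, ?_⟩
  simp [Finset.mul_sum, mul_pow, ← map_pow, Real.sq_sqrt hc]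

lemma IsSumSqForms.eq_C_of_isUnit (hp : IsSumSqForms k p) (hu : IsUnit p) :
    k = 0 ∧ ∃ c : ℝ, 0 < c ∧ p = C c := by
  obtain ⟨c, hc, rfl⟩ := (isUnit_iff_eq_C_of_isReduced).mp hu
  have hc0 : c ≠ 0 := hc.ne_zero
  refine ⟨?_, c, lt_of_le_of_ne ?_ hc0.symm, rfl⟩
  · have := hp.isHomogeneous.inj_right (isHomogeneous_C σ c) (C_ne_zero.mpr hc0)
    omega
  · obtain ⟨N, t, -, ht⟩ := hp
    have h := congrArg constantCoeff ht
    simp only [constantCoeff_C, map_sum, map_pow] at h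
    rw [h]
    positivity

end Real

theorem exists_sumSq_mul_add_mul_of_degree_dehomogenize {K : Type*} [Field K] {d m : ℕ}
    {g q p : MvPolynomial (Fin 2) K} (hm : m ≤ d) (hg : g.IsHomogeneous m)
    (hgdeg : (dehomogenize g).degree = m) (hq : IsSumSqForms (d - m) q) (hp : IsSumSqForms d p)
    (hgq : IsRelPrime g q) :
    ∃ s, IsSumSqForms m s ∧ ∃ τ : MvPolynomial (Fin 2) K, τ.IsHomogeneous (2 * d - m) ∧
      p = s * q + τ * g := by
  have hG0 : dehomogenize g ≠ 0 := Polynomial.ne_zero_of_coe_le_degree hgdeg.ge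
  have hqhom := hq.isHomogeneous
  obtain ⟨Np, t, ht, rfl⟩ := hp
  obtain ⟨Nq, u, hu, rfl⟩ := hq
  obtain ⟨S, hSdeg, hdvd⟩ := Polynomial.exists_sum_sq_mul_dvd_sub hG0
    (fun i => dehomogenize (t i)) (fun j => dehomogenize (u j))
    (by simpa using isCoprime_dehomogenize hg hqhom hgq)
  have hSm (ij : Fin Np × Fin Nq) : (S ij).natDegree ≤ m :=
    Polynomial.natDegree_le_of_degree_le ((hSdeg ij).le.trans hgdeg.le)
  set s := ∑ ij, (S ij).homogenize m ^ 2
  have hs : IsSumSqForms m s := isSumSqForms_sum _ fun _ => Polynomial.isHomogeneous_homogenize _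
  have hsq : (s * ∑ j, u j ^ 2).IsHomogeneous (2 * d) := by
    simpa [← mul_add, Nat.add_sub_cancel' hm] using hs.isHomogeneous.mul hqhom
  obtain ⟨τ, hτ, hτg⟩ := exists_eq_mul_of_dehomogenize_dvd
    ((isSumSqForms_sum t ht).isHomogeneous.sub hsq) hg hgdeg
    (by simpa [s, dehomogenize_homogenize (hSm _)] using hdvd)
  exact ⟨s, hs, τ, hτ, by rw [← hτg, add_sub_cancel]⟩

end BinaryForm

open BinaryForm in
/-- Projective version: given binary forms `g` of degree `m`, a sum of squares `q` of binary
forms of degree `d - m`, and a sum of squares `p` of binary forms of degree `d`, if `g` and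
`q` are coprime, then `p = (∑ sᵢ²) q + t g` with `sᵢ` of degree `m` and `t` of degree `2d - m`. -/
theorem sos_multiplier_mod_forms
    (d m : ℕ) (hm : m ≤ d)
    (g q p : MvPolynomial (Fin 2) ℝ)
    (hg : g.IsHomogeneous m)
    (hq : ∃ (N : ℕ) (t : Fin N → MvPolynomial (Fin 2) ℝ),
      (∀ i, (t i).IsHomogeneous (d - m)) ∧ q = ∑ i, (t i) ^ 2)
    (hp : ∃ (N : ℕ) (t : Fin N → MvPolynomial (Fin 2) ℝ),
      (∀ i, (t i).IsHomogeneous d) ∧ p = ∑ i, (t i) ^ 2)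
    (hcop : ∀ w : MvPolynomial (Fin 2) ℝ, w ∣ g → w ∣ q → IsUnit w) :
    ∃ (N : ℕ) (s : Fin N → MvPolynomial (Fin 2) ℝ) (t : MvPolynomial (Fin 2) ℝ),
      (∀ i, (s i).IsHomogeneous m) ∧ t.IsHomogeneous (2 * d - m) ∧
      p = (∑ i, (s i) ^ 2) * q + t * g := by
  have hgq : IsRelPrime g q := hcop
  obtain rfl | hg0 := eq_or_ne g 0
  · obtain ⟨hdm, c, hc, rfl⟩ := IsSumSqForms.eq_C_of_isUnit hq (hgq (dvd_zero q) dvd_rfl)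
    obtain rfl : m = d := by omega
    obtain ⟨N, s, hs, hsp⟩ := IsSumSqForms.C_mul hp (inv_nonneg.mpr hc.le)
    refine ⟨N, s, 0, hs, isHomogeneous_zero _ _ _, ?_⟩
    rw [← hsp, mul_zero, add_zero, mul_right_comm, ← C_mul, inv_mul_cancel₀ hc.ne', C_1, one_mul]
  obtain ⟨c, hc⟩ := exists_degree_dehomogenize_shear_eq hg hg0
  obtain ⟨_, ⟨N, s, hs, rfl⟩, τ, hτ, h⟩ := exists_sumSq_mul_add_mul_of_degree_dehomogenize hm
    (isHomogeneous_shear hg c) hc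
    (IsSumSqForms.map hq (shear c).toRingHom fun _ hF => isHomogeneous_shear hF c)
    (IsSumSqForms.map hp (shear c).toRingHom fun _ hF => isHomogeneous_shear hF c)
    (IsRelPrime.of_map (shear c).symm (by simpa using hgq))
  refine ⟨N, fun i => shear (-c) (s i), shear (-c) τ, fun i => isHomogeneous_shear (hs i) _,
    isHomogeneous_shear hτ _, (shear c).injective ?_⟩
  simpa [← shear_symm, map_sum] using h
end

section
/- Let ⟪·,·⟫ be a symmetric bilinear form on MvPolynomial (Fin 2) ℝ that is positive definite on the subspace of binary forms of degree 2d. Let u₁, u₂ be binary forms of degree d and let p be a binary form of degree 2d that is a sum of squares of binary forms of degree d. Suppose the gradient condition holds: ⟪u₁v₁ + u₂v₂, u₁² + u₂² − p⟫ = 0 for all binary forms v₁, v₂ of degree d. If there exist binary forms v₁', v₂' of degree d with u₁v₁' + u₂v₂' = p, then u₁² + u₂² = p. -/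
/-!
Write `g = u₁² + u₂² - p`. Testing the gradient condition against `(v₁, v₂) = (u₁, u₂)` gives
`⟪u₁² + u₂², g⟫ = 0`, and against a preimage `(v₁', v₂')` of `p` gives `⟪p, g⟫ = 0`. Subtracting,
`⟪g, g⟫ = 0`, and `g` is a binary form of degree `2d`, so `g = 0` by positive definiteness.
-/

open MvPolynomial

theorem LinearMap.eq_of_apply_sub_eq_apply_sub {R M : Type*} [CommRing R] [Preorder R]
    [AddCommGroup M] [Module R M] (B : M →ₗ[R] M →ₗ[R] R) (S : Submodule R M)
    (hpos : ∀ q ∈ S, q ≠ 0 → 0 < B q q) {x y : M} (hx : x ∈ S) (hy : y ∈ S)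
    (h : B x (x - y) = B y (x - y)) : x = y := by
  have hsub : B (x - y) (x - y) = 0 := by rw [LinearMap.map_sub₂, h, sub_self]
  by_contra hne
  exact (hpos (x - y) (S.sub_mem hx hy) (sub_ne_zero.mpr hne)).ne' hsub

theorem MvPolynomial.IsHomogeneous.sq_add_sq {σ R : Type*} [CommSemiring R]
    {u₁ u₂ : MvPolynomial σ R} {d : ℕ} (hu₁ : u₁.IsHomogeneous d) (hu₂ : u₂.IsHomogeneous d) :
    (u₁ ^ 2 + u₂ ^ 2).IsHomogeneous (2 * d) := by
  rw [sq, sq, two_mul]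
  exact (hu₁.mul hu₁).add (hu₂.mul hu₂)

theorem first_order_sufficient_general
    (d : ℕ)
    (B : MvPolynomial (Fin 2) ℝ →ₗ[ℝ] MvPolynomial (Fin 2) ℝ →ₗ[ℝ] ℝ)
    (hpos : ∀ q : MvPolynomial (Fin 2) ℝ, q.IsHomogeneous (2 * d) → q ≠ 0 → 0 < B q q)
    (u₁ u₂ p : MvPolynomial (Fin 2) ℝ)
    (hu₁ : u₁.IsHomogeneous d) (hu₂ : u₂.IsHomogeneous d)
    (hp : p.IsHomogeneous (2 * d))
    (hgrad : ∀ v₁ v₂ : MvPolynomial (Fin 2) ℝ, v₁.IsHomogeneous d → v₂.IsHomogeneous d →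
      B (u₁ * v₁ + u₂ * v₂) (u₁ ^ 2 + u₂ ^ 2 - p) = 0)
    (hmem : ∃ v₁' v₂' : MvPolynomial (Fin 2) ℝ,
      v₁'.IsHomogeneous d ∧ v₂'.IsHomogeneous d ∧ u₁ * v₁' + u₂ * v₂' = p) :
    u₁ ^ 2 + u₂ ^ 2 = p := by
  obtain ⟨v₁', v₂', hv₁', hv₂', hvp⟩ := hmem
  have h_sq : B (u₁ ^ 2 + u₂ ^ 2) (u₁ ^ 2 + u₂ ^ 2 - p) = 0 := by
    simpa only [sq] using hgrad u₁ u₂ hu₁ hu₂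
  have h_p : B p (u₁ ^ 2 + u₂ ^ 2 - p) = 0 := hvp ▸ hgrad v₁' v₂' hv₁' hv₂'
  refine B.eq_of_apply_sub_eq_apply_sub (homogeneousSubmodule (Fin 2) ℝ (2 * d)) hpos
    (hu₁.sq_add_sq hu₂) hp ?_
  rw [h_sq, h_p]

/-- First-order sufficient condition: if the gradient vanishes and `p` lies in the image of
the map `(v₁, v₂) ↦ u₁ v₁ + u₂ v₂`, then `u₁² + u₂² = p`. -/
theorem first_order_sufficient
    (d : ℕ)
    (B : MvPolynomial (Fin 2) ℝ →ₗ[ℝ] MvPolynomial (Fin 2) ℝ →ₗ[ℝ] ℝ)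
    (hsymm : ∀ a b : MvPolynomial (Fin 2) ℝ, B a b = B b a)
    (hpos : ∀ q : MvPolynomial (Fin 2) ℝ, q.IsHomogeneous (2 * d) → q ≠ 0 → 0 < B q q)
    (u₁ u₂ p : MvPolynomial (Fin 2) ℝ)
    (hu₁ : u₁.IsHomogeneous d) (hu₂ : u₂.IsHomogeneous d)
    (hp : p.IsHomogeneous (2 * d))
    (hpsos : ∃ (N : ℕ) (t : Fin N → MvPolynomial (Fin 2) ℝ),
      (∀ i, (t i).IsHomogeneous d) ∧ p = ∑ i, (t i) ^ 2)
    (hgrad : ∀ v₁ v₂ : MvPolynomial (Fin 2) ℝ, v₁.IsHomogeneous d → v₂.IsHomogeneous d →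
      B (u₁ * v₁ + u₂ * v₂) (u₁ ^ 2 + u₂ ^ 2 - p) = 0)
    (hmem : ∃ v₁' v₂' : MvPolynomial (Fin 2) ℝ,
      v₁'.IsHomogeneous d ∧ v₂'.IsHomogeneous d ∧ u₁ * v₁' + u₂ * v₂' = p) :
    u₁ ^ 2 + u₂ ^ 2 = p :=
  first_order_sufficient_general d B hpos u₁ u₂ p hu₁ hu₂ hp hgrad hmem
end

section
/- Let ⟪·,·⟫ be a symmetric bilinear form on MvPolynomial (Fin 2) ℝ that is positive definite on the subspace of binary forms of degree 2d. Let u₁, u₂ be coprime binary forms of degree d and let p be a binary form of degree 2d. If the gradient condition holds, namely ⟪u₁v₁ + u₂v₂, u₁² + u₂² − p⟫ = 0 for all binary forms v₁, v₂ of degree d, then u₁² + u₂² = p. -/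
/-!
Coprimality of `u₁, u₂` forces every solution of `u₁ v₁ + u₂ v₂ = 0` in forms of degree `d` to be
a multiple of `(u₂, -u₁)`. So the map `(v₁, v₂) ↦ u₁ v₁ + u₂ v₂`, from a space of dimension
`2d + 2` to the binary forms of degree `2d` (dimension `2d + 1`), has kernel of dimension at most
one and is onto. Hence `g = u₁² + u₂² - p` equals some `u₁ v₁ + u₂ v₂`, the gradient condition
gives `⟪g, g⟫ = 0`, and positivity forces `g = 0`.
-/

open MvPolynomial Module

namespace MvPolynomial

variable {K σ : Type*} [Field K]

instance [Finite σ] (n : ℕ) : FiniteDimensional K (homogeneousSubmodule σ K n) :=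
  Module.Finite.iff_fg.mpr (homogeneousSubmodule_fg σ K n)

theorem finrank_homogeneousSubmodule_s9 [Fintype σ] (n : ℕ) :
    finrank K (homogeneousSubmodule σ K n) = (Fintype.card σ).multichoose n := by
  classical
  have hsupp : {m : σ →₀ ℕ | m.degree = n} =
      ((Finset.univ : Finset σ).finsuppAntidiag n : Set (σ →₀ ℕ)) := by
    ext m
    simp [Finsupp.degree_eq_sum]
  have hb := finrank_eq_nat_card_basis (basisRestrictSupport K {m : σ →₀ ℕ | m.degree = n})
  rw [restrictSupport, ← homogeneousSubmodule_eq_finsupp_supported] at hb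
  rw [hb, hsupp, Nat.card_coe_set_eq, Set.ncard_coe_finset,
    Finset.card_finsuppAntidiag_nat_eq_multichoose, Finset.card_univ]

theorem IsHomogeneous.exists_eq_C_of_mul {R : Type*} [CommRing R] [IsDomain R] {n : ℕ}
    {u c : MvPolynomial σ R} (hu : u.IsHomogeneous n) (hu0 : u ≠ 0)
    (huc : (u * c).IsHomogeneous n) : ∃ r : R, c = C r := by
  rcases eq_or_ne c 0 with rfl | hc0
  · exact ⟨0, C_0.symm⟩
  have hdeg : u.totalDegree + c.totalDegree = u.totalDegree := by
    rw [← totalDegree_mul_of_isDomain hu0 hc0, huc.totalDegree (mul_ne_zero hu0 hc0),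
      hu.totalDegree hu0]
  exact ⟨_, totalDegree_eq_zero_iff_eq_C.mp (by omega)⟩

section MulAddMul

variable {n : ℕ} {u₁ u₂ v₁ v₂ : MvPolynomial σ K}

theorem exists_eq_C_mul_of_mul_add_mul_eq_zero_of_ne_zero (hu₂ : u₂.IsHomogeneous n)
    (hu₂0 : u₂ ≠ 0) (hrel : IsRelPrime u₁ u₂) (hv₁ : v₁.IsHomogeneous n)
    (h : u₁ * v₁ + u₂ * v₂ = 0) : ∃ r : K, v₁ = C r * u₂ ∧ v₂ = -(C r * u₁) := by
  obtain ⟨c, rfl⟩ : u₂ ∣ v₁ := hrel.symm.dvd_of_dvd_mul_left ⟨-v₂, by linear_combination h⟩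
  obtain ⟨r, rfl⟩ := hu₂.exists_eq_C_of_mul hu₂0 hv₁
  refine ⟨r, mul_comm _ _, ?_⟩
  have : u₂ * (v₂ + C r * u₁) = 0 := by linear_combination h
  linear_combination (mul_eq_zero.mp this).resolve_left hu₂0

theorem exists_eq_C_mul_of_mul_add_mul_eq_zero (hu₁ : u₁.IsHomogeneous n)
    (hu₂ : u₂.IsHomogeneous n) (hrel : IsRelPrime u₁ u₂) (hv₁ : v₁.IsHomogeneous n)
    (hv₂ : v₂.IsHomogeneous n) (h : u₁ * v₁ + u₂ * v₂ = 0) :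
    ∃ r : K, v₁ = C r * u₂ ∧ v₂ = -(C r * u₁) := by
  by_cases hu₂0 : u₂ = 0
  · have hu₁0 : u₁ ≠ 0 := by
      rintro rfl
      exact not_isRelPrime_zero_zero (hu₂0 ▸ hrel)
    obtain ⟨r, h₂, h₁⟩ := exists_eq_C_mul_of_mul_add_mul_eq_zero_of_ne_zero (v₂ := v₁) hu₁ hu₁0
      hrel.symm hv₂ (by linear_combination h)
    exact ⟨-r, by rw [h₁, map_neg]; ring, by rw [h₂, map_neg]; ring⟩
  · exact exists_eq_C_mul_of_mul_add_mul_eq_zero_of_ne_zero hu₂ hu₂0 hrel hv₁ h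

variable (hu₁ : u₁.IsHomogeneous n) (hu₂ : u₂.IsHomogeneous n)

noncomputable def mulAddMulMap :
    homogeneousSubmodule σ K n × homogeneousSubmodule σ K n →ₗ[K]
      homogeneousSubmodule σ K (n + n) :=
  LinearMap.codRestrict _
    (((LinearMap.mulLeft K u₁).comp (homogeneousSubmodule σ K n).subtype).coprod
      ((LinearMap.mulLeft K u₂).comp (homogeneousSubmodule σ K n).subtype))
    fun v => (hu₁.mul v.1.2).add (hu₂.mul v.2.2)

theorem ker_mulAddMulMap_le (hrel : IsRelPrime u₁ u₂) :
    LinearMap.ker (mulAddMulMap hu₁ hu₂) ≤ K ∙ (⟨u₂, hu₂⟩, ⟨-u₁, hu₁.neg⟩) := by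
  rintro ⟨v₁, v₂⟩ hv
  obtain ⟨r, h₁, h₂⟩ := exists_eq_C_mul_of_mul_add_mul_eq_zero hu₁ hu₂ hrel v₁.2 v₂.2
    (congrArg Subtype.val hv)
  refine Submodule.mem_span_singleton.mpr ⟨r, Prod.ext (Subtype.ext ?_) (Subtype.ext ?_)⟩
  · simp [h₁, smul_eq_C_mul]
  · simp [h₂, smul_eq_C_mul]

theorem mulAddMulMap_surjective {u₁ u₂ : MvPolynomial (Fin 2) K} (hu₁ : u₁.IsHomogeneous n)
    (hu₂ : u₂.IsHomogeneous n) (hrel : IsRelPrime u₁ u₂) :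
    Function.Surjective (mulAddMulMap hu₁ hu₂) := by
  rw [← LinearMap.range_eq_top]
  apply Submodule.eq_top_of_finrank_eq
  have hker : finrank K (LinearMap.ker (mulAddMulMap hu₁ hu₂)) ≤ 1 :=
    (Submodule.finrank_mono (ker_mulAddMulMap_le hu₁ hu₂ hrel)).trans
      ((finrank_span_le_card _).trans (by simp))
  have hrange := Submodule.finrank_le (LinearMap.range (mulAddMulMap hu₁ hu₂))
  have hsum := LinearMap.finrank_range_add_finrank_ker (mulAddMulMap hu₁ hu₂)
  simp only [finrank_prod, finrank_homogeneousSubmodule_s9, Fintype.card_fin,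
    Nat.multichoose_two] at hrange hsum ⊢
  omega

end MulAddMul

end MvPolynomial

theorem coprime_case_no_spurious_focp_general
    (d : ℕ)
    (B : MvPolynomial (Fin 2) ℝ →ₗ[ℝ] MvPolynomial (Fin 2) ℝ →ₗ[ℝ] ℝ)
    (hpos : ∀ q : MvPolynomial (Fin 2) ℝ, q.IsHomogeneous (2 * d) → q ≠ 0 → 0 < B q q)
    (u₁ u₂ p : MvPolynomial (Fin 2) ℝ)
    (hu₁ : u₁.IsHomogeneous d) (hu₂ : u₂.IsHomogeneous d)
    (hcop : ∀ w : MvPolynomial (Fin 2) ℝ, w ∣ u₁ → w ∣ u₂ → IsUnit w)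
    (hp : p.IsHomogeneous (2 * d))
    (hgrad : ∀ v₁ v₂ : MvPolynomial (Fin 2) ℝ, v₁.IsHomogeneous d → v₂.IsHomogeneous d →
      B (u₁ * v₁ + u₂ * v₂) (u₁ ^ 2 + u₂ ^ 2 - p) = 0) :
    u₁ ^ 2 + u₂ ^ 2 = p := by
  set g := u₁ ^ 2 + u₂ ^ 2 - p
  have hg : g.IsHomogeneous (2 * d) := by
    rw [mul_comm] at hp ⊢
    exact ((hu₁.pow 2).add (hu₂.pow 2)).sub hp
  obtain ⟨⟨v₁, v₂⟩, hv⟩ := mulAddMulMap_surjective hu₁ hu₂ (fun w => hcop w)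
    ⟨g, by rwa [mem_homogeneousSubmodule, ← two_mul]⟩
  have hBgg : B g g = 0 := by
    have hvg : u₁ * v₁ + u₂ * v₂ = g := congrArg Subtype.val hv
    simpa only [hvg] using hgrad v₁ v₂ v₁.2 v₂.2
  by_contra hne
  exact (hpos g hg (sub_ne_zero.mpr hne)).ne' hBgg

/-- Coprime case: if `u₁, u₂` are coprime binary forms of degree `d` and the gradient of
`f_p` vanishes at `(u₁, u₂)`, then `u₁² + u₂² = p`. -/
theorem coprime_case_no_spurious_focp
    (d : ℕ)
    (B : MvPolynomial (Fin 2) ℝ →ₗ[ℝ] MvPolynomial (Fin 2) ℝ →ₗ[ℝ] ℝ)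
    (hsymm : ∀ a b : MvPolynomial (Fin 2) ℝ, B a b = B b a)
    (hpos : ∀ q : MvPolynomial (Fin 2) ℝ, q.IsHomogeneous (2 * d) → q ≠ 0 → 0 < B q q)
    (u₁ u₂ p : MvPolynomial (Fin 2) ℝ)
    (hu₁ : u₁.IsHomogeneous d) (hu₂ : u₂.IsHomogeneous d)
    (hcop : ∀ w : MvPolynomial (Fin 2) ℝ, w ∣ u₁ → w ∣ u₂ → IsUnit w)
    (hp : p.IsHomogeneous (2 * d))
    (hgrad : ∀ v₁ v₂ : MvPolynomial (Fin 2) ℝ, v₁.IsHomogeneous d → v₂.IsHomogeneous d →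
      B (u₁ * v₁ + u₂ * v₂) (u₁ ^ 2 + u₂ ^ 2 - p) = 0) :
    u₁ ^ 2 + u₂ ^ 2 = p :=
  coprime_case_no_spurious_focp_general d B hpos u₁ u₂ p hu₁ hu₂ hcop hp hgrad
end

section
/- Let ⟪·,·⟫ be a symmetric bilinear form on MvPolynomial (Fin 2) ℝ that is positive definite on the subspace of binary forms of degree 2d, with ‖q‖² = ⟪q,q⟫. Let u₁, u₂ be binary forms of degree d and let p be a binary form of degree 2d that is a sum of squares of binary forms of degree d. Suppose: (gradient) ⟪u₁v₁ + u₂v₂, u₁² + u₂² − p⟫ = 0 for all binary forms v₁, v₂ of degree d; (Hessian) ⟪v₁² + v₂², u₁² + u₂² − p⟫ + 2‖u₁v₁ + u₂v₂‖² ≥ 0 for all binary forms v₁, v₂ of degree d; and (membership) there exist binary forms v₁', v₂' of degree d and a finite family of pairs (w₁⁽ⁱ⁾, w₂⁽ⁱ⁾) of binary forms of degree d with u₁w₁⁽ⁱ⁾ + u₂w₂⁽ⁱ⁾ = 0 for each i and p = u₁v₁' + u₂v₂' + ∑ᵢ ((w₁⁽ⁱ⁾)² + (w₂⁽ⁱ⁾)²).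 Then u₁² + u₂² = p. -/
/-!
Put `g = u₁² + u₂² - p`. The gradient condition at `(v₁, v₂) = (u₁, u₂)` gives
`⟪u₁² + u₂², g⟫ = 0`. Writing `p = u₁v₁' + u₂v₂' + ∑ᵢ ((w₁⁽ⁱ⁾)² + (w₂⁽ⁱ⁾)²)`, the first part is
orthogonal to `g` by the gradient condition, and on each kernel direction `(w₁⁽ⁱ⁾, w₂⁽ⁱ⁾)` the
Hessian condition reduces to `⟪(w₁⁽ⁱ⁾)² + (w₂⁽ⁱ⁾)², g⟫ ≥ 0`; hence `⟪p, g⟫ ≥ 0`. Therefore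
`‖g‖² = ⟪u₁² + u₂², g⟫ - ⟪p, g⟫ ≤ 0`, and `g`, a form of degree `2d`, vanishes.
-/

open MvPolynomial

section BilinearDescent

variable {R M : Type*} [CommRing R] [PartialOrder R] [IsOrderedRing R]
  [AddCommGroup M] [Module R M] (B : M →ₗ[R] M →ₗ[R] R)

theorem eq_of_apply_sub_eq_zero_of_apply_sub_nonneg {P : M → Prop}
    (hpos : ∀ z, P z → z ≠ 0 → 0 < B z z) {a p : M} (hP : P (a - p))
    (ha : B a (a - p) = 0) (hp : 0 ≤ B p (a - p)) : a = p := by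
  by_contra hne
  have hself : B (a - p) (a - p) = -B p (a - p) := by
    rw [B.map_sub₂, ha, zero_sub]
  have := hpos _ hP (sub_ne_zero.mpr hne)
  rw [hself, neg_pos] at this
  exact this.not_ge hp

theorem apply_add_sum_nonneg {ι : Type*} (s : Finset ι) {x g : M} {y : ι → M}
    (hx : B x g = 0) (hy : ∀ i ∈ s, 0 ≤ B (y i) g) : 0 ≤ B (x + ∑ i ∈ s, y i) g := by
  rw [map_add, map_sum, LinearMap.add_apply, LinearMap.sum_apply, hx, zero_add]
  exact Finset.sum_nonneg hy

end BilinearDescent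

theorem second_order_sufficient_general
    (d : ℕ)
    (B : MvPolynomial (Fin 2) ℝ →ₗ[ℝ] MvPolynomial (Fin 2) ℝ →ₗ[ℝ] ℝ)
    (hpos : ∀ q : MvPolynomial (Fin 2) ℝ, q.IsHomogeneous (2 * d) → q ≠ 0 → 0 < B q q)
    (u₁ u₂ p : MvPolynomial (Fin 2) ℝ)
    (hu₁ : u₁.IsHomogeneous d) (hu₂ : u₂.IsHomogeneous d)
    (hp : p.IsHomogeneous (2 * d))
    (hgrad : ∀ v₁ v₂ : MvPolynomial (Fin 2) ℝ, v₁.IsHomogeneous d → v₂.IsHomogeneous d →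
      B (u₁ * v₁ + u₂ * v₂) (u₁ ^ 2 + u₂ ^ 2 - p) = 0)
    (hhess : ∀ v₁ v₂ : MvPolynomial (Fin 2) ℝ, v₁.IsHomogeneous d → v₂.IsHomogeneous d →
      0 ≤ B (v₁ ^ 2 + v₂ ^ 2) (u₁ ^ 2 + u₂ ^ 2 - p)
        + 2 * B (u₁ * v₁ + u₂ * v₂) (u₁ * v₁ + u₂ * v₂))
    (hmem : ∃ (v₁' v₂' : MvPolynomial (Fin 2) ℝ) (N : ℕ)
        (w₁ w₂ : Fin N → MvPolynomial (Fin 2) ℝ),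
      v₁'.IsHomogeneous d ∧ v₂'.IsHomogeneous d ∧
      (∀ i, (w₁ i).IsHomogeneous d ∧ (w₂ i).IsHomogeneous d) ∧
      (∀ i, u₁ * w₁ i + u₂ * w₂ i = 0) ∧
      p = u₁ * v₁' + u₂ * v₂' + ∑ i, ((w₁ i) ^ 2 + (w₂ i) ^ 2)) :
    u₁ ^ 2 + u₂ ^ 2 = p := by
  obtain ⟨v₁', v₂', N, w₁, w₂, hv₁', hv₂', hw, hker, hpeq⟩ := hmem
  have hkernel : ∀ i ∈ Finset.univ, 0 ≤ B (w₁ i ^ 2 + w₂ i ^ 2) (u₁ ^ 2 + u₂ ^ 2 - p) :=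
    fun i _ => by simpa [hker i] using hhess (w₁ i) (w₂ i) (hw i).1 (hw i).2
  have hBp : 0 ≤ B p (u₁ ^ 2 + u₂ ^ 2 - p) := by
    have := apply_add_sum_nonneg B _ (hgrad v₁' v₂' hv₁' hv₂') hkernel
    rwa [← hpeq] at this
  refine eq_of_apply_sub_eq_zero_of_apply_sub_nonneg B hpos ((hu₁.sq_add_sq hu₂).sub hp) ?_ hBp
  simpa only [sq] using hgrad u₁ u₂ hu₁ hu₂

/-- Second-order sufficient condition: if the gradient vanishes, the Hessian is PSD, and
`p ∈ image(A_u) + cone(σ(ker A_u))`, then `u₁² + u₂² = p`. -/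
theorem second_order_sufficient
    (d : ℕ)
    (B : MvPolynomial (Fin 2) ℝ →ₗ[ℝ] MvPolynomial (Fin 2) ℝ →ₗ[ℝ] ℝ)
    (hsymm : ∀ a b : MvPolynomial (Fin 2) ℝ, B a b = B b a)
    (hpos : ∀ q : MvPolynomial (Fin 2) ℝ, q.IsHomogeneous (2 * d) → q ≠ 0 → 0 < B q q)
    (u₁ u₂ p : MvPolynomial (Fin 2) ℝ)
    (hu₁ : u₁.IsHomogeneous d) (hu₂ : u₂.IsHomogeneous d)
    (hp : p.IsHomogeneous (2 * d))
    (hpsos : ∃ (N : ℕ) (t : Fin N → MvPolynomial (Fin 2) ℝ),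
      (∀ i, (t i).IsHomogeneous d) ∧ p = ∑ i, (t i) ^ 2)
    (hgrad : ∀ v₁ v₂ : MvPolynomial (Fin 2) ℝ, v₁.IsHomogeneous d → v₂.IsHomogeneous d →
      B (u₁ * v₁ + u₂ * v₂) (u₁ ^ 2 + u₂ ^ 2 - p) = 0)
    (hhess : ∀ v₁ v₂ : MvPolynomial (Fin 2) ℝ, v₁.IsHomogeneous d → v₂.IsHomogeneous d →
      0 ≤ B (v₁ ^ 2 + v₂ ^ 2) (u₁ ^ 2 + u₂ ^ 2 - p)
        + 2 * B (u₁ * v₁ + u₂ * v₂) (u₁ * v₁ + u₂ * v₂))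
    (hmem : ∃ (v₁' v₂' : MvPolynomial (Fin 2) ℝ) (N : ℕ)
        (w₁ w₂ : Fin N → MvPolynomial (Fin 2) ℝ),
      v₁'.IsHomogeneous d ∧ v₂'.IsHomogeneous d ∧
      (∀ i, (w₁ i).IsHomogeneous d ∧ (w₂ i).IsHomogeneous d) ∧
      (∀ i, u₁ * w₁ i + u₂ * w₂ i = 0) ∧
      p = u₁ * v₁' + u₂ * v₂' + ∑ i, ((w₁ i) ^ 2 + (w₂ i) ^ 2)) :
    u₁ ^ 2 + u₂ ^ 2 = p :=
  second_order_sufficient_general d B hpos u₁ u₂ p hu₁ hu₂ hp hgrad hhess hmem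
end
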